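/- arXiv:1306.6419 — 8 statements merged into one kernel-verified Lean document; each statement's English description precedes it below -/
import Mathlib

section
/- Let f : ℝ^n → ℝ be a convex polynomial. If the Hessian ∇²f(x₀) is positive definite at some point x₀ ∈ ℝ^n, then f is strictly convex on ℝ^n. -/
/-!
If `f` failed to be strictly convex, it would be affine on a segment `[x, y]`. Along the line
through `x` and `y`, `f` is a convex polynomial of one variable that meets its chord at an
interior point; convexity forces it to agree with the chord on a whole interval, and then, being
a polynomial, on the whole line. A convex function lies above its tangent hyperplanes, and a
tangent hyperplane at any point `u` can stay below this affine line only if it has the same slope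
along `y - x`. So the derivative of `f` in the direction `y - x` is constant, and the Hessian at
`x₀` vanishes on `y - x`.
-/

open Set AffineMap

theorem MvPolynomial.exists_eval_lineMap {σ R : Type*} [CommRing R] (p : MvPolynomial σ R)
    (x y : σ → R) : ∃ q : Polynomial R, ∀ s, eval (lineMap x y s) p = q.eval s := by
  refine ⟨aeval (fun i => Polynomial.C (y i - x i) * Polynomial.X + Polynomial.C (x i)) p,
    fun s => ?_⟩
  rw [← Polynomial.coe_aeval_eq_eval, comp_aeval_apply]
  simp [lineMap_apply_module', mul_comm, Pi.add_def]

theorem ConvexOn.eq_lineMap_of_eq_lineMap {g : ℝ → ℝ} (hg : ConvexOn ℝ (Icc 0 1) g)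
    {s t : ℝ} (hs : 0 < s) (hst : s < t) (ht : t < 1) (heq : g t = lineMap (g 0) (g 1) t) :
    g s = lineMap (g 0) (g 1) s := by
  have h0 : (0 : ℝ) ∈ Icc 0 1 := left_mem_Icc.2 zero_le_one
  have h1 : (1 : ℝ) ∈ Icc 0 1 := right_mem_Icc.2 zero_le_one
  have hleft := hg.slope_mono_adjacent h0 (z := t) ⟨by linarith, ht.le⟩ hs hst
  have hright := hg.slope_mono_adjacent (x := s) ⟨hs.le, by linarith⟩ h1 hst ht
  rw [sub_zero, div_le_div_iff₀ hs (by linarith)] at hleft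
  rw [div_le_div_iff₀ (by linarith) (by linarith)] at hright
  rw [lineMap_apply_ring'] at heq ⊢
  rw [heq] at hleft hright
  nlinarith

theorem Polynomial.eval_eq_lineMap_of_convexOn {q : Polynomial ℝ}
    (hq : ConvexOn ℝ (Icc 0 1) q.eval) {t : ℝ} (ht : t ∈ Ioo 0 1)
    (heq : q.eval t = lineMap (q.eval 0) (q.eval 1) t) (s : ℝ) :
    q.eval s = lineMap (q.eval 0) (q.eval 1) s := by
  set L : Polynomial ℝ := C (q.eval 1 - q.eval 0) * X + C (q.eval 0)
  have hL : ∀ s, L.eval s = lineMap (q.eval 0) (q.eval 1) s := fun s => by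
    simp [L, lineMap_apply_ring', mul_comm]
  have hqL : q = L := by
    refine eq_of_infinite_eval_eq q L ((Ioo_infinite ht.1).mono fun r hr => ?_)
    rw [mem_ofPred_eq, hL, hq.eq_lineMap_of_eq_lineMap hr.1 hr.2 ht.2 heq]
  rw [← hL, ← hqL]

theorem eq_of_forall_add_mul_le {a b c d : ℝ} (h : ∀ s, a + c * s ≤ b + d * s) : c = d := by
  by_contra hcd
  have := h ((b - a + 1) / (c - d))
  have : (c - d) * ((b - a + 1) / (c - d)) = b - a + 1 := mul_div_cancel₀ _ (sub_ne_zero.2 hcd)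
  linarith

theorem iteratedFDeriv_two_apply_eq_zero_of_fderiv_apply_eq {𝕜 E F : Type*}
    [NontriviallyNormedField 𝕜] [NormedAddCommGroup E] [NormedSpace 𝕜 E]
    [NormedAddCommGroup F] [NormedSpace 𝕜 F] {f : E → F} {x : E}
    (hf : DifferentiableAt 𝕜 (fderiv 𝕜 f) x) {v : E} {c : F}
    (h : ∀ u, fderiv 𝕜 f u v = c) (w : E) : iteratedFDeriv 𝕜 2 f x ![w, v] = 0 := by
  have hD := ((ContinuousLinearMap.apply 𝕜 F v).hasFDerivAt.comp x hf.hasFDerivAt)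
  rw [show (ContinuousLinearMap.apply 𝕜 F v ∘ fderiv 𝕜 f) = fun _ => c from funext h] at hD
  have := congrArg (· w) (hD.unique (hasFDerivAt_const c x))
  simpa [iteratedFDeriv_two_apply] using this

section

variable {E : Type*} [NormedAddCommGroup E] [NormedSpace ℝ E]

theorem ConvexOn.add_fderiv_sub_le {s : Set E} {f : E → ℝ} (hf : ConvexOn ℝ s f) {x y : E}
    (hx : x ∈ s) (hy : y ∈ s) (hfx : DifferentiableAt ℝ f x) :
    f x + fderiv ℝ f x (y - x) ≤ f y := by
  have hd : HasDerivAt (f ∘ lineMap x y) (fderiv ℝ f x (y - x)) (0 : ℝ) := by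
    have hfx' : HasFDerivAt f (fderiv ℝ f x) (lineMap x y (0 : ℝ)) := by
      simpa using hfx.hasFDerivAt
    exact hfx'.comp_hasDerivAt _ hasDerivAt_lineMap
  have := (hf.comp_affineMap (lineMap x y)).le_slope_of_hasDerivAt (by simpa) (by simpa)
    one_pos hd
  rw [slope_def_field] at this
  simp only [Function.comp_apply, lineMap_apply_zero, lineMap_apply_one, sub_zero, div_one] at this
  linarith

theorem ConvexOn.fderiv_apply_sub_eq_of_eq_lineMap {f : E → ℝ} (hf : ConvexOn ℝ univ f)
    {x y u : E} (hu : DifferentiableAt ℝ f u)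
    (h : ∀ s : ℝ, f (lineMap x y s) = lineMap (f x) (f y) s) :
    fderiv ℝ f u (y - x) = f y - f x := by
  refine eq_of_forall_add_mul_le (a := f u + fderiv ℝ f u (x - u)) (b := f x) fun s => ?_
  have := hf.add_fderiv_sub_le (mem_univ u) (mem_univ (lineMap x y s)) hu
  rw [h, lineMap_apply_module', lineMap_apply_ring', add_sub_assoc, map_add, map_smul] at this
  simp only [smul_eq_mul] at this
  linarith

end

/-- A convex polynomial with positive definite Hessian at some point is strictly convex. -/
theorem convex_poly_posdef_hessian_strictConvex {n : ℕ}
    (p : MvPolynomial (Fin n) ℝ) (f : (Fin n → ℝ) → ℝ)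
    (hf : ∀ x, f x = MvPolynomial.eval x p)
    (hconv : ConvexOn ℝ Set.univ f)
    (x₀ : Fin n → ℝ)
    (hpd : ∀ v : Fin n → ℝ, v ≠ 0 → 0 < iteratedFDeriv ℝ 2 f x₀ ![v, v]) :
    StrictConvexOn ℝ Set.univ f := by
  have hsmooth : ContDiff ℝ 2 f := by
    rw [funext hf]; exact (AnalyticOnNhd.eval_mvPolynomial p).contDiff
  refine ⟨convex_univ, fun x _ y _ hxy a b ha hb hab =>
    (hconv.2 trivial trivial ha.le hb.le hab).lt_of_ne fun heq => ?_⟩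
  obtain ⟨q, hq⟩ := p.exists_eval_lineMap x y
  have hqf : ∀ s, q.eval s = f (lineMap x y s) := fun s => by rw [hf, hq]
  have hline : ∀ s : ℝ, f (lineMap x y s) = lineMap (f x) (f y) s := by
    have hqconv : ConvexOn ℝ (Icc 0 1) q.eval := by
      rw [funext hqf]
      exact (hconv.comp_affineMap (lineMap x y)).subset (subset_univ _) (convex_Icc 0 1)
    have hqb : q.eval b = lineMap (q.eval 0) (q.eval 1) b := by
      rw [hqf, hqf, hqf, lineMap_apply_zero, lineMap_apply_one, lineMap_apply_module,
        lineMap_apply_module, show 1 - b = a by linarith, heq]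
    intro s
    simpa [hqf] using q.eval_eq_lineMap_of_convexOn hqconv ⟨hb, by linarith⟩ hqb s
  have hderiv : ∀ u, fderiv ℝ f u (y - x) = f y - f x := fun u =>
    hconv.fderiv_apply_sub_eq_of_eq_lineMap ((hsmooth.differentiable two_ne_zero) u) hline
  have hdiff2 : DifferentiableAt ℝ (fderiv ℝ f) x₀ :=
    (hsmooth.fderiv_right (m := 1) le_rfl).differentiable one_ne_zero x₀
  exact (hpd (y - x) (sub_ne_zero.2 hxy.symm)).ne'
    (iteratedFDeriv_two_apply_eq_zero_of_fderiv_apply_eq hdiff2 hderiv _)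
end

section
/- Let h : ℝ^n → ℝ be a convex polynomial that is bounded below on ℝ^n. Then h attains its infimum on ℝ^n, i.e., there exists x* ∈ ℝ^n with h(x*) = inf_{x ∈ ℝ^n} h(x). -/
/-!
If a continuous convex function does not attain its infimum, its sublevel sets are unbounded.
A closed convex unbounded set contains a ray, and through the (closed, convex) epigraph that ray
is transported to every point: the function is nonincreasing along some direction `d ≠ 0`. A
polynomial bounded on a half-line is constant, so a convex polynomial bounded below is even
constant along `d`. Restricted to a complement of the space of all such directions (the constancy
space), the function therefore has to attain its infimum, and that minimum is global because the
function is invariant under translation by the constancy space.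
-/

open Polynomial Filter Set Topology

theorem Polynomial.degree_le_zero_of_forall_nonneg_abs_eval_le {q : ℝ[X]} {C : ℝ}
    (hq : ∀ t, 0 ≤ t → |q.eval t| ≤ C) : q.degree ≤ 0 := by
  by_contra! hdeg
  obtain ⟨t, hCt, ht⟩ :=
    ((q.abs_tendsto_atTop hdeg).eventually_gt_atTop C |>.and (eventually_ge_atTop 0)).exists
  exact (hq t ht).not_gt hCt

def IsPolynomialAlongLines {E : Type*} [AddCommGroup E] [Module ℝ E] (f : E → ℝ) : Prop :=
  ∀ x d : E, ∃ q : ℝ[X], ∀ t : ℝ, q.eval t = f (x + t • d)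

theorem MvPolynomial.isPolynomialAlongLines_eval {σ : Type*} (p : MvPolynomial σ ℝ) :
    IsPolynomialAlongLines fun x : σ → ℝ => MvPolynomial.eval x p := by
  intro x d
  set line : σ → ℝ[X] := fun i => Polynomial.C (x i) + Polynomial.C (d i) * Polynomial.X
  refine ⟨MvPolynomial.aeval line p, fun t => ?_⟩
  have hline : (fun i => Polynomial.aeval t (line i)) = x + t • d := by
    funext i
    simp only [line, map_add, map_mul, Polynomial.aeval_C, Polynomial.aeval_X]
    simp [mul_comm]
  rw [← Polynomial.coe_aeval_eq_eval, MvPolynomial.comp_aeval_apply, hline]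
  rfl

section AddCommGroup

variable {E : Type*} [AddCommGroup E] [Module ℝ E]

namespace IsPolynomialAlongLines

variable {f : E → ℝ}

theorem comp_linearMap (hf : IsPolynomialAlongLines f) {F : Type*} [AddCommGroup F]
    [Module ℝ F] (g : F →ₗ[ℝ] E) : IsPolynomialAlongLines (f ∘ g) := by
  intro x d
  obtain ⟨q, hq⟩ := hf (g x) (g d)
  exact ⟨q, by simpa using hq⟩

theorem apply_add_smul_eq_of_forall_nonneg_le (hf : IsPolynomialAlongLines f)
    (hbd : BddBelow (range f)) {x d : E} (hdec : ∀ t : ℝ, 0 ≤ t → f (x + t • d) ≤ f x)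
    (t : ℝ) : f (x + t • d) = f x := by
  obtain ⟨q, hq⟩ := hf x d
  obtain ⟨m, hm⟩ := hbd
  have hdeg : q.degree ≤ 0 := by
    refine degree_le_zero_of_forall_nonneg_abs_eval_le (C := max |m| |f x|) fun s hs => ?_
    exact abs_le_max_abs_abs (hq s ▸ hm (mem_range_self _)) (hq s ▸ hdec s hs)
  have h0 := hq 0
  rw [zero_smul, add_zero] at h0
  rw [← hq, ← h0, eq_C_of_degree_le_zero hdeg, eval_C, eval_C]

end IsPolynomialAlongLines

def constancySpace {α : Type*} (f : E → α) : Submodule ℝ E where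
  carrier := {d | ∀ x (t : ℝ), f (x + t • d) = f x}
  add_mem' {d₁ d₂} hd₁ hd₂ x t := by rw [smul_add, ← add_assoc, hd₂, hd₁]
  zero_mem' x t := by rw [smul_zero, add_zero]
  smul_mem' c d hd x t := by rw [smul_smul, hd]

theorem apply_add_of_mem_constancySpace {α : Type*} {f : E → α} {l : E}
    (hl : l ∈ constancySpace f) (x : E) : f (x + l) = f x := by
  simpa using hl x 1

end AddCommGroup

section TopologicalVectorSpace

variable {E : Type*} [AddCommGroup E] [Module ℝ E] [TopologicalSpace E]
  [IsTopologicalAddGroup E] [ContinuousSMul ℝ E]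

theorem Convex.add_smul_mem_of_forall_add_smul_mem {s : Set E} (hs : Convex ℝ s)
    (hsc : IsClosed s) {x₀ x d : E} (hray : ∀ t : ℝ, 0 ≤ t → x₀ + t • d ∈ s) (hx : x ∈ s)
    {t : ℝ} (ht : 0 ≤ t) : x + t • d ∈ s := by
  -- `(1 - l) • x + l • (x₀ + (t / l) • d) ∈ s` tends to `x + t • d` as `l → 0⁺`
  have hlim : Tendsto (fun l : ℝ => (1 - l) • x + l • x₀ + t • d) (𝓝[>] 0) (𝓝 (x + t • d)) := by
    have hcont : Continuous fun l : ℝ => (1 - l) • x + l • x₀ + t • d := by fun_prop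
    simpa using (hcont.tendsto 0).mono_left nhdsWithin_le_nhds
  refine hsc.mem_of_tendsto hlim ?_
  filter_upwards [Ioo_mem_nhdsGT zero_lt_one] with l ⟨hl0, hl1⟩
  convert hs hx (hray (t / l) (div_nonneg ht hl0.le)) (sub_nonneg.2 hl1.le) hl0.le
    (sub_add_cancel 1 l) using 1
  rw [smul_add, smul_smul, mul_div_cancel₀ _ hl0.ne', add_assoc]

theorem ConvexOn.apply_add_smul_le_of_forall_add_smul_le {f : E → ℝ} (hf : ConvexOn ℝ univ f)
    (hfc : Continuous f) {x₀ d : E} (hray : ∀ t : ℝ, 0 ≤ t → f (x₀ + t • d) ≤ f x₀) (x : E)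
    {t : ℝ} (ht : 0 ≤ t) : f (x + t • d) ≤ f x := by
  have hepi : IsClosed {p : E × ℝ | p.1 ∈ univ ∧ f p.1 ≤ p.2} := by
    simpa using isClosed_le (hfc.comp continuous_fst) continuous_snd
  have := hf.convex_epigraph.add_smul_mem_of_forall_add_smul_mem hepi (x₀ := (x₀, f x₀))
    (d := (d, 0)) (fun t ht => by simpa using hray t ht) (x := (x, f x)) (by simp) ht
  simpa using this

end TopologicalVectorSpace

section NormedSpace

variable {E : Type*} [NormedAddCommGroup E] [NormedSpace ℝ E]

theorem Convex.exists_ne_zero_forall_add_smul_mem [ProperSpace E] {s : Set E}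
    (hs : Convex ℝ s) (hsc : IsClosed s) (hsb : ¬Bornology.IsBounded s) {x : E} (hx : x ∈ s) :
    ∃ d ≠ 0, ∀ t : ℝ, 0 ≤ t → x + t • d ∈ s := by
  have hfar : ∀ k : ℕ, ∃ y ∈ s, (k : ℝ) < ‖y - x‖ := by
    intro k
    by_contra! hnear
    exact hsb ((Metric.isBounded_closedBall (x := x) (r := k)).subset
      fun y hy => by simpa [dist_eq_norm] using hnear y hy)
  choose y hys hyfar using hfar
  have hpos : ∀ k, 0 < ‖y k - x‖ := fun k => (Nat.cast_nonneg k).trans_lt (hyfar k)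
  set u : ℕ → E := fun k => ‖y k - x‖⁻¹ • (y k - x)
  have hu : ∀ k, u k ∈ Metric.sphere (0 : E) 1 := fun k => by
    simp [u, norm_smul, (hpos k).ne']
  obtain ⟨d, hd, φ, hφ, hud⟩ := (isCompact_sphere (0 : E) 1).tendsto_subseq hu
  refine ⟨d, ne_zero_of_mem_unit_sphere ⟨d, hd⟩, fun t ht => ?_⟩
  refine hsc.mem_of_tendsto (tendsto_const_nhds.add (hud.const_smul t)) ?_
  filter_upwards [eventually_ge_atTop ⌈t⌉₊] with k hk
  have htk : t ≤ ‖y (φ k) - x‖ := calc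
    t ≤ ⌈t⌉₊ := Nat.le_ceil t
    _ ≤ φ k := by exact_mod_cast hk.trans (hφ.id_le k)
    _ ≤ ‖y (φ k) - x‖ := (hyfar (φ k)).le
  have := hs.add_smul_sub_mem hx (hys (φ k))
    ⟨div_nonneg ht (hpos _).le, (div_le_one (hpos _)).2 htk⟩
  simpa [u, smul_smul, div_eq_mul_inv] using this

theorem ConvexOn.exists_ne_zero_forall_add_smul_le [ProperSpace E] {f : E → ℝ}
    (hf : ConvexOn ℝ univ f) (hfc : Continuous f) (hmin : ¬∃ x, ∀ y, f x ≤ f y) :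
    ∃ d ≠ 0, ∀ x (t : ℝ), 0 ≤ t → f (x + t • d) ≤ f x := by
  have hunb : ¬Bornology.IsBounded {x | f x ≤ f 0} := fun hb =>
    hmin (hfc.exists_forall_le_of_isBounded 0 hb)
  have hconv : Convex ℝ {x | f x ≤ f 0} := by simpa using hf.convex_le (f 0)
  obtain ⟨d, hd, hray⟩ := hconv.exists_ne_zero_forall_add_smul_mem
    (isClosed_le hfc continuous_const) hunb (le_refl (f 0))
  exact ⟨d, hd, fun x t ht => hf.apply_add_smul_le_of_forall_add_smul_le hfc (x₀ := 0)
    (fun t ht => by simpa using hray t ht) x ht⟩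

theorem ConvexOn.exists_forall_le_of_isPolynomialAlongLines [FiniteDimensional ℝ E]
    {f : E → ℝ} (hf : ConvexOn ℝ univ f) (hpoly : IsPolynomialAlongLines f)
    (hbd : BddBelow (range f)) : ∃ x, ∀ y, f x ≤ f y := by
  obtain ⟨W, hW⟩ := (constancySpace f).exists_isCompl
  have hdecomp : ∀ x : E, ∃ w ∈ W, ∃ l ∈ constancySpace f, w + l = x := fun x =>
    Submodule.mem_sup.1 (hW.symm.sup_eq_top ▸ Submodule.mem_top)
  set g : W → ℝ := f ∘ W.subtype
  suffices ∃ w, ∀ v, g w ≤ g v by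
    obtain ⟨w, hw⟩ := this
    refine ⟨w, fun x => ?_⟩
    obtain ⟨v, hv, l, hl, rfl⟩ := hdecomp x
    simpa [g, apply_add_of_mem_constancySpace hl] using hw ⟨v, hv⟩
  by_contra hmin
  have hgc : Continuous g :=
    (continuousOn_univ.1 (hf.continuousOn isOpen_univ)).comp continuous_subtype_val
  obtain ⟨d, hd, hdec⟩ := (hf.comp_linearMap W.subtype).exists_ne_zero_forall_add_smul_le hgc hmin
  have hgconst : ∀ v (t : ℝ), g (v + t • d) = g v := fun v =>
    (hpoly.comp_linearMap W.subtype).apply_add_smul_eq_of_forall_nonneg_le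
      (hbd.mono (range_comp_subset_range _ _)) (hdec v)
  have hdf : (d : E) ∈ constancySpace f := by
    intro x t
    obtain ⟨v, hv, l, hl, rfl⟩ := hdecomp x
    simpa [g, add_right_comm v l, apply_add_of_mem_constancySpace hl] using
      hgconst ⟨v, hv⟩ t
  exact hd (Subtype.ext (Submodule.disjoint_def.1 hW.disjoint _ hdf d.2))

end NormedSpace

/-- A convex polynomial bounded below attains its infimum on ℝⁿ. -/
theorem convex_poly_bddBelow_attains_inf {n : ℕ}
    (p : MvPolynomial (Fin n) ℝ) (h : (Fin n → ℝ) → ℝ)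
    (hh : ∀ x, h x = MvPolynomial.eval x p)
    (hconv : ConvexOn ℝ Set.univ h)
    (hbd : BddBelow (Set.range h)) :
    ∃ xs : Fin n → ℝ, h xs = ⨅ x : Fin n → ℝ, h x := by
  have hpoly : IsPolynomialAlongLines h := funext hh ▸ p.isPolynomialAlongLines_eval
  obtain ⟨xs, hxs⟩ := hconv.exists_forall_le_of_isPolynomialAlongLines hpoly hbd
  exact ⟨xs, le_antisymm (le_ciInf hxs) (ciInf_le hbd xs)⟩
end

section
/- Let g : ℝ^l → ℝ be a convex function and suppose there exist α ∈ ℝ, a point a ∈ ℝ^l, a sequence a_k with ‖a_k‖ → ∞, g(a_k) ≤ α for all k, and (a_k − a)/‖a_k − a‖ → v with v ≠ 0. Then g(a + t v) ≤ max{g(a), α} for all t ≥ 0. -/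
/-- If a convex function has an unbounded sublevel sequence whose normalized directions from `a`
converge to `v ≠ 0`, then `g` is bounded along the ray `a + t v`, `t ≥ 0`. -/
theorem convex_ray_bound {l : ℕ} (g : (Fin l → ℝ) → ℝ)
    (hconv : ConvexOn ℝ Set.univ g)
    (α : ℝ) (a : Fin l → ℝ) (a_seq : ℕ → (Fin l → ℝ)) (v : Fin l → ℝ)
    (hnorm : Filter.Tendsto (fun k => ‖a_seq k‖) Filter.atTop Filter.atTop)
    (hlev : ∀ k, g (a_seq k) ≤ α)
    (hdir : Filter.Tendsto (fun k => ‖a_seq k - a‖⁻¹ • (a_seq k - a)) Filter.atTop (nhds v))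
    (hv : v ≠ 0) :
    ∀ t : ℝ, 0 ≤ t → g (a + t • v) ≤ max (g a) α := by
  intro t ht
  -- continuity of g
  have gcont : Continuous g := by
    have := hconv.continuousOn isOpen_univ
    exact continuousOn_univ.mp this
  -- ‖a_seq k - a‖ → ∞
  have hnorm' : Filter.Tendsto (fun k => ‖a_seq k - a‖) Filter.atTop Filter.atTop := by
    apply Filter.tendsto_atTop_mono (fun k => ?_)
      (Filter.tendsto_atTop_add_const_right _ (-‖a‖) hnorm)
    have := norm_sub_norm_le (a_seq k) a
    linarith
  -- eventually the norm exceeds max t 1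
  have hev : ∀ᶠ k in Filter.atTop, max t 1 ≤ ‖a_seq k - a‖ :=
    hnorm'.eventually_ge_atTop _
  -- the points on segments converge to a + t • v
  have hlim : Filter.Tendsto (fun k => a + t • (‖a_seq k - a‖⁻¹ • (a_seq k - a)))
      Filter.atTop (nhds (a + t • v)) :=
    Filter.Tendsto.const_add _ (hdir.const_smul t)
  have hglim := (gcont.tendsto _).comp hlim
  refine le_of_tendsto hglim ?_
  filter_upwards [hev] with k hk
  set r := ‖a_seq k - a‖ with hr
  have hr1 : (1:ℝ) ≤ r := le_trans (le_max_right _ _) hk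
  have hrt : t ≤ r := le_trans (le_max_left _ _) hk
  have hrpos : 0 < r := lt_of_lt_of_le one_pos hr1
  set s := t * r⁻¹ with hs
  have hs0 : 0 ≤ s := mul_nonneg ht (inv_nonneg.mpr hrpos.le)
  have hs1 : s ≤ 1 := by
    rw [hs]
    rw [mul_inv_le_iff₀ hrpos]
    simpa using hrt
  have hkey := hconv.2 (Set.mem_univ a) (Set.mem_univ (a_seq k))
    (by linarith : (0:ℝ) ≤ 1 - s) hs0 (by ring)
  have heq : a + t • (r⁻¹ • (a_seq k - a)) = (1 - s) • a + s • a_seq k := by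
    rw [hs]
    simp only [smul_smul, smul_sub, sub_smul, one_smul]
    abel
  simp only [Function.comp]
  rw [heq]
  refine le_trans hkey ?_
  have h1 : g a ≤ max (g a) α := le_max_left _ _
  have h2 : g (a_seq k) ≤ max (g a) α := le_trans (hlev k) (le_max_right _ _)
  calc (1 - s) * g a + s * g (a_seq k)
      ≤ (1 - s) * max (g a) α + s * max (g a) α := by
        apply add_le_add
        · exact mul_le_mul_of_nonneg_left h1 (by linarith)
        · exact mul_le_mul_of_nonneg_left h2 hs0
    _ = max (g a) α := by ring
end

section
/- Let f : ℝ^n → ℝ be a convex polynomial that is coercive on ℝ^n, and suppose there exist x ≠ y in ℝ^n and t₀ ∈ (0,1) with f((1−t₀)x + t₀y) = (1−t₀)f(x) + t₀f(y). Then a contradiction follows; that is, a coercive convex polynomial is strictly convex. -/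
/-!
Restrict `f` to the line through `x` and `y`: the restriction `φ` is a convex polynomial in one
variable that meets its chord over `[0, 1]` at an interior point. A convex function whose defect
from the chord vanishes at both ends and in the interior vanishes identically on the segment, so
`φ` agrees with an affine function on `[0, 1]` and, being a polynomial, on all of `ℝ`. But an
affine function cannot tend to `+∞` in both directions, while coercivity of `f` forces `φ` to.
-/

open Set Filter Topology AffineMap Polynomial

theorem concaveOn_lineMap {𝕜 β : Type*} [Field 𝕜] [LinearOrder 𝕜] [AddCommGroup β]
    [PartialOrder β] [Module 𝕜 β] (a b : β) : ConcaveOn 𝕜 univ (lineMap a b : 𝕜 → β) :=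
  (concaveOn_id convex_univ).comp_affineMap (lineMap a b)

section ConvexOnLine

variable {𝕜 β : Type*} [Field 𝕜] [LinearOrder 𝕜] [IsStrictOrderedRing 𝕜]

theorem ConvexOn.eqOn_Icc_of_endpoints_le [AddCommMonoid β] [LinearOrder β]
    [IsOrderedCancelAddMonoid β] [Module 𝕜 β] [PosSMulStrictMono 𝕜 β] {s : Set 𝕜}
    {f : 𝕜 → β} {a b c : 𝕜} (hf : ConvexOn 𝕜 s f) (ha : a ∈ s) (hc : c ∈ s)
    (hb : b ∈ Ioo a c) (hab : f a ≤ f b) (hcb : f c ≤ f b) :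
    EqOn f (fun _ ↦ f b) (Icc a c) := by
  intro t ht
  have ht_seg : t ∈ segment 𝕜 a c := segment_eq_Icc (hb.1.trans hb.2).le ▸ ht
  have hts : t ∈ s := hf.1.segment_subset ha hc ht_seg
  refine le_antisymm ((hf.le_on_segment ha hc ht_seg).trans (max_le hab hcb)) ?_
  rcases le_total t b with htb | hbt
  · exact hf.le_left_of_right_le'' hts hc htb hb.2 hcb
  · exact hf.le_right_of_left_le'' ha hts hb.1 hbt hab

theorem ConvexOn.eqOn_lineMap_of_eq [AddCommGroup β] [LinearOrder β] [IsOrderedAddMonoid β]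
    [Module 𝕜 β] [PosSMulStrictMono 𝕜 β] {φ : 𝕜 → β}
    (hφ : ConvexOn 𝕜 (Icc 0 1) φ) {t₀ : 𝕜} (ht₀ : t₀ ∈ Ioo 0 1)
    (heq : φ t₀ = lineMap (φ 0) (φ 1) t₀) :
    EqOn φ (lineMap (φ 0) (φ 1)) (Icc 0 1) := by
  have hdefect : ConvexOn 𝕜 (Icc 0 1) (φ - ⇑(lineMap (φ 0) (φ 1) : 𝕜 →ᵃ[𝕜] β)) :=
    hφ.sub ((concaveOn_lineMap _ _).subset (subset_univ _) (convex_Icc 0 1))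
  intro t ht
  have := hdefect.eqOn_Icc_of_endpoints_le (left_mem_Icc.2 zero_le_one)
    (right_mem_Icc.2 zero_le_one) ht₀ (by simp [heq]) (by simp [heq]) ht
  simpa [heq, sub_eq_zero] using this

end ConvexOnLine

theorem MvPolynomial.exists_polynomial_eval_eq_eval_lineMap {σ R : Type*} [CommRing R]
    (p : MvPolynomial σ R) (x y : σ → R) :
    ∃ q : R[X], ∀ t, q.eval t = eval (lineMap x y t) p := by
  let ℓ : σ → R[X] := fun i ↦
    lineMap (Polynomial.C (x i)) (Polynomial.C (y i)) (Polynomial.X : R[X])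
  refine ⟨aeval ℓ p, fun t ↦ ?_⟩
  have hℓ : (fun i ↦ (ℓ i).eval t) = lineMap x y t := by
    funext i
    simp [ℓ, lineMap_apply_ring', lineMap_apply_module']
  rw [← Polynomial.coe_aeval_eq_eval, comp_aeval_apply, ← hℓ]
  rfl

theorem Polynomial.exists_eval_eq_lineMap {R : Type*} [CommRing R] (a b : R) :
    ∃ q : R[X], ∀ t, q.eval t = lineMap a b t :=
  ⟨X * C (b - a) + C a, fun t ↦ by simp [lineMap_apply_ring']⟩

theorem eq_of_eqOn_infinite_of_polynomial {R : Type*} [CommRing R] [IsDomain R] {φ ψ : R → R}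
    {p q : R[X]} (hp : ∀ t, p.eval t = φ t) (hq : ∀ t, q.eval t = ψ t) {s : Set R}
    (hs : s.Infinite) (h : EqOn φ ψ s) : φ = ψ := by
  have hpq : p = q := eq_of_infinite_eval_eq p q (hs.mono fun t ht ↦ by simp [hp, hq, h ht])
  funext t
  rw [← hp, ← hq, hpq]

theorem tendsto_lineMap_cocompact {𝕜 E : Type*} [NontriviallyNormedField 𝕜] [ProperSpace 𝕜]
    [NormedAddCommGroup E] [NormedSpace 𝕜 E] {x y : E} (hxy : x ≠ y) :
    Tendsto (lineMap x y : 𝕜 → E) (cocompact 𝕜) (cocompact E) :=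
  tendsto_cocompact_of_tendsto_dist_comp_atTop x <| by
    simpa only [dist_lineMap_left] using
      tendsto_norm_cocompact_atTop.atTop_mul_const (dist_pos.2 hxy)

theorem not_tendsto_lineMap_cocompact_atTop (a b : ℝ) :
    ¬ Tendsto (lineMap a b : ℝ → ℝ) (cocompact ℝ) atTop := by
  intro h
  rw [cocompact_eq_atBot_atTop, tendsto_sup] at h
  have hsum := h.2.atTop_add_atTop (h.1.comp tendsto_neg_atTop_atBot)
  have hconst (t : ℝ) : lineMap a b t + lineMap a b (-t) = 2 * a := by
    simp only [lineMap_apply_ring']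
    ring
  exact not_tendsto_const_atTop _ _ (hsum.congr hconst)

/-- A coercive convex polynomial is strictly convex: equality in the convexity inequality
at an interior parameter for distinct points yields a contradiction. -/
theorem coercive_convex_poly_strictConvex {n : ℕ}
    (p : MvPolynomial (Fin n) ℝ) (f : (Fin n → ℝ) → ℝ)
    (hf : ∀ x, f x = MvPolynomial.eval x p)
    (hconv : ConvexOn ℝ Set.univ f)
    (hcoer : Filter.Tendsto f (Filter.cocompact (Fin n → ℝ)) Filter.atTop)
    (x y : Fin n → ℝ) (hxy : x ≠ y) (t₀ : ℝ) (ht₀ : t₀ ∈ Set.Ioo (0 : ℝ) 1)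
    (heq : f ((1 - t₀) • x + t₀ • y) = (1 - t₀) * f x + t₀ * f y) :
    False := by
  set φ : ℝ → ℝ := f ∘ lineMap x y
  have hφ_convex : ConvexOn ℝ (Icc 0 1) φ :=
    (hconv.comp_affineMap _).subset (subset_univ _) (convex_Icc 0 1)
  have hφ_t₀ : φ t₀ = lineMap (φ 0) (φ 1) t₀ := by
    simpa [φ, lineMap_apply_module] using heq
  have hchord : EqOn φ (lineMap (f x) (f y)) (Icc 0 1) := by
    simpa [φ] using hφ_convex.eqOn_lineMap_of_eq ht₀ hφ_t₀
  obtain ⟨q, hq⟩ := p.exists_polynomial_eval_eq_eval_lineMap x y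
  obtain ⟨r, hr⟩ := exists_eval_eq_lineMap (f x) (f y)
  have hφ_affine : φ = lineMap (f x) (f y) :=
    eq_of_eqOn_infinite_of_polynomial (fun t ↦ (hq t).trans (hf _).symm) hr
      (Icc_infinite zero_lt_one) hchord
  have hφ_coercive : Tendsto φ (cocompact ℝ) atTop := hcoer.comp (tendsto_lineMap_cocompact hxy)
  exact not_tendsto_lineMap_cocompact_atTop _ _ (hφ_affine ▸ hφ_coercive)
end

section
/- Let f, g₁, …, g_m : ℝ^n → ℝ be convex polynomials and K = {x ∈ ℝ^n : gᵢ(x) ≤ 0 for all i} nonempty. If inf_{x ∈ K} f(x) > −∞, then the infimum is attained: there exists x* ∈ K with f(x*) = inf_{x ∈ K} f(x). -/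
/-!
Induction on the dimension. Fix a feasible `x₀`. If the sublevel set `{x ∈ K | f x ≤ f x₀}` is
bounded it is compact, and `f` attains its minimum there. Otherwise this closed convex set contains
a ray `x₀ + t • d`. A convex polynomial bounded above on a ray has degree at most one along it, and
the midpoint inequality shows that its slope along `d` is the same on every parallel line. Hence
`f` is constant along `d` (it is bounded below on `K`), and each `g i` decreases along `d`. Moving
along `d` satisfies every constraint of negative slope, so the problem reduces to the hyperplane
`ker ℓ` (`ℓ d = 1`) with only the constraints of slope zero, which has smaller dimension.
-/

open Set Filter Topology Polynomial Bornology

lemma nonpos_of_forall_add_mul_le {a b M : ℝ} (h : ∀ t : ℝ, 0 ≤ t → a + t * b ≤ M) : b ≤ 0 := by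
  by_contra! hb
  have := h ((|M - a| + 1) / b) (by positivity)
  rw [div_mul_cancel₀ _ hb.ne'] at this
  linarith [le_abs_self (M - a)]

namespace Polynomial

theorem degree_le_one_of_convexOn_of_le {P : ℝ[X]} (hc : ConvexOn ℝ univ fun t ↦ P.eval t)
    {M : ℝ} (hM : ∀ t : ℝ, 0 ≤ t → P.eval t ≤ M) : P.degree ≤ 1 := by
  by_contra! hdeg
  have hpos : 0 < P.degree := lt_trans (by decide) hdeg
  have hlead : P.leadingCoeff < 0 := by
    by_contra! hlead
    obtain ⟨t, ht, ht₀⟩ := ((P.tendsto_atTop_of_leadingCoeff_nonneg hpos hlead).eventually_gt_atTop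
      M |>.and (eventually_ge_atTop 0)).exists
    exact (hM t ht₀).not_gt ht
  -- `P - L` vanishes at `0` and `1`, so convexity makes it nonnegative on `(1, ∞)`; but it has
  -- the negative leading coefficient of `P` and degree `≥ 2`.
  set L : ℝ[X] := C (P.eval 1 - P.eval 0) * X + C (P.eval 0)
  have hL : L.degree < P.degree := lt_of_le_of_lt degree_linear_le hdeg
  have hQ : ∀ t : ℝ, 1 < t → 0 ≤ (P - L).eval t := by
    intro t ht
    have := hc.slope_mono_adjacent (mem_univ 0) (mem_univ t) zero_lt_one ht
    rw [sub_zero, div_one, le_div_iff₀ (by linarith)] at this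
    simp only [L, eval_sub, eval_add, eval_mul, eval_C, eval_X]
    nlinarith
  have htend := (P - L).tendsto_atBot_of_leadingCoeff_nonpos
    (by rwa [degree_sub_eq_left_of_degree_lt hL])
    (by rw [leadingCoeff_sub_of_degree_lt hL]; exact hlead.le)
  obtain ⟨t, ht, ht₁⟩ := (htend.eventually_lt_atBot 0 |>.and (eventually_gt_atTop 1)).exists
  exact (hQ t ht₁).not_gt ht

theorem exists_eval_eq_add_mul_of_convexOn_of_le {P : ℝ[X]} (hc : ConvexOn ℝ univ fun t ↦ P.eval t)
    {M : ℝ} (hM : ∀ t : ℝ, 0 ≤ t → P.eval t ≤ M) :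
    ∃ c ≤ 0, ∀ t : ℝ, P.eval t = P.eval 0 + t * c := by
  have hP : ∀ t : ℝ, P.eval t = P.eval 0 + t * P.coeff 1 := by
    intro t
    rw [eq_X_add_C_of_degree_le_one (degree_le_one_of_convexOn_of_le hc hM)]
    simp
    ring
  exact ⟨P.coeff 1, nonpos_of_forall_add_mul_le fun t ht ↦ hP t ▸ hM t ht, hP⟩

end Polynomial

def IsPolynomialOnLines {E : Type*} [AddCommGroup E] [Module ℝ E] (h : E → ℝ) : Prop :=
  ∀ x d : E, ∃ q : ℝ[X], ∀ t : ℝ, h (x + t • d) = q.eval t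

theorem IsPolynomialOnLines.comp_linearMap {E F : Type*} [AddCommGroup E] [Module ℝ E]
    [AddCommGroup F] [Module ℝ F] {h : F → ℝ} (hh : IsPolynomialOnLines h) (L : E →ₗ[ℝ] F) :
    IsPolynomialOnLines (h ∘ L) := fun x d ↦ by
  simpa using hh (L x) (L d)

theorem MvPolynomial.isPolynomialOnLines_eval {σ : Type*} (p : MvPolynomial σ ℝ) :
    IsPolynomialOnLines fun x : σ → ℝ ↦ eval x p := fun x d ↦ by
  refine ⟨aeval (fun i ↦ Polynomial.C (x i) + Polynomial.C (d i) * Polynomial.X) p, fun t ↦ ?_⟩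
  dsimp only
  rw [← Polynomial.coe_aeval_eq_eval, ← AlgHom.comp_apply, comp_aeval,
    ← coe_aeval_eq_eval]
  refine congrArg (fun v ↦ aeval v p) ?_
  funext i
  simp only [Pi.add_apply, Pi.smul_apply, smul_eq_mul, map_add, map_mul, Polynomial.aeval_C,
    Polynomial.aeval_X, Algebra.algebraMap_self, RingHom.id_apply]
  ring

section Recession

variable {E : Type*} [AddCommGroup E] [Module ℝ E] {h : E → ℝ}

theorem ConvexOn.two_mul_map_add_smul_le (hh : ConvexOn ℝ univ h) (x w d : E) (t : ℝ) :
    2 * h (w + t • d) ≤ h (x + (2 * t) • d) + h ((2 : ℝ) • w - x) := by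
  have hmid : w + t • d = (1 / 2 : ℝ) • (x + (2 * t) • d) + (1 / 2 : ℝ) • ((2 : ℝ) • w - x) := by
    module
  have := hh.2 (mem_univ (x + (2 * t) • d)) (mem_univ ((2 : ℝ) • w - x))
    (by norm_num : (0 : ℝ) ≤ 1 / 2) (by norm_num : (0 : ℝ) ≤ 1 / 2) (by norm_num)
  rw [← hmid, smul_eq_mul, smul_eq_mul] at this
  linarith

theorem ConvexOn.convexOn_add_smul (hh : ConvexOn ℝ univ h) (x d : E) :
    ConvexOn ℝ univ fun t : ℝ ↦ h (x + t • d) := by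
  simpa [Function.comp_def] using
    (hh.translate_right x).comp_linearMap (LinearMap.toSpanSingleton ℝ E d)

theorem ConvexOn.exists_slope_of_le_on_ray (hh : ConvexOn ℝ univ h) (hp : IsPolynomialOnLines h)
    {x₀ d : E} {M : ℝ} (hM : ∀ t : ℝ, 0 ≤ t → h (x₀ + t • d) ≤ M) :
    ∃ γ ≤ 0, ∀ (x : E) (t : ℝ), h (x + t • d) = h x + t * γ := by
  have hline : ∀ x : E, ∃ c ≤ 0, ∀ t : ℝ, h (x + t • d) = h x + t * c := by
    intro x
    obtain ⟨q, hq⟩ := hp x d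
    have hqc : ConvexOn ℝ univ fun t ↦ q.eval t := by
      simpa only [hq] using hh.convexOn_add_smul x d
    obtain ⟨c, hc, hqc⟩ := Polynomial.exists_eval_eq_add_mul_of_convexOn_of_le hqc
      (M := (M + h ((2 : ℝ) • x - x₀)) / 2) fun t ht ↦ by
        have := hh.two_mul_map_add_smul_le x₀ x d t
        linarith [hq t, hM (2 * t) (by positivity)]
    refine ⟨c, hc, fun t ↦ ?_⟩
    rw [hq, hqc, ← hq, zero_smul, add_zero]
  choose c hc hline using hline
  have hc_le : ∀ w x : E, c w ≤ c x := by
    intro w x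
    have : 2 * (c w - c x) ≤ 0 := nonpos_of_forall_add_mul_le (M := h x + h ((2 : ℝ) • w - x))
      (a := 2 * h w) fun t _ ↦ by
        have := hh.two_mul_map_add_smul_le x w d t
        rw [hline, hline] at this
        linarith
    linarith
  exact ⟨c 0, hc 0, fun x t ↦ by rw [hline, le_antisymm (hc_le x 0) (hc_le 0 x)]⟩

end Recession

theorem Convex.exists_ray_subset_of_not_isBounded {E : Type*} [NormedAddCommGroup E]
    [NormedSpace ℝ E] [ProperSpace E] {S : Set E}
    (hconv : Convex ℝ S) (hcl : IsClosed S) (hub : ¬IsBounded S) {x₀ : E} (hx₀ : x₀ ∈ S) :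
    ∃ d ≠ 0, ∀ t : ℝ, 0 ≤ t → x₀ + t • d ∈ S := by
  have hfar : ∀ k : ℕ, ∃ x ∈ S, (k : ℝ) + 1 < ‖x - x₀‖ := by
    intro k
    by_contra! hk
    exact hub ((Metric.isBounded_iff_subset_closedBall x₀).2
      ⟨k + 1, fun x hx ↦ by simpa [dist_eq_norm] using hk x hx⟩)
  choose x hxS hxfar using hfar
  have hxpos : ∀ k, 0 < ‖x k - x₀‖ := fun k ↦ by linarith [hxfar k, (k.cast_nonneg : (0 : ℝ) ≤ k)]
  set u : ℕ → E := fun k ↦ ‖x k - x₀‖⁻¹ • (x k - x₀)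
  have hu : ∀ k, u k ∈ Metric.sphere (0 : E) 1 := fun k ↦ by
    simp [u, norm_smul, (hxpos k).ne']
  obtain ⟨d, hd, φ, hφ, hlim⟩ := (isCompact_sphere (0 : E) 1).tendsto_subseq hu
  refine ⟨d, ne_zero_of_mem_unit_sphere ⟨d, hd⟩, fun t ht ↦ ?_⟩
  refine hcl.mem_of_tendsto (tendsto_const_nhds.add (hlim.const_smul t)) ?_
  filter_upwards [eventually_ge_atTop ⌈t⌉₊] with k hk
  have htk : t ≤ ‖x (φ k) - x₀‖ := by
    have : (k : ℝ) ≤ φ k := Nat.cast_le.2 hφ.le_apply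
    linarith [Nat.le_ceil t, (Nat.cast_le (α := ℝ)).2 hk, hxfar (φ k)]
  have hseg := hconv.add_smul_sub_mem hx₀ (hxS (φ k))
    ⟨div_nonneg ht (hxpos _).le, div_le_one_of_le₀ htk (hxpos _).le⟩
  simpa [u, smul_smul, div_eq_mul_inv] using hseg

theorem IsClosed.exists_isMinOn_of_isBounded_sublevel {X : Type*} [PseudoMetricSpace X]
    [ProperSpace X] {K : Set X} {f : X → ℝ}
    (hK : IsClosed K) (hf : Continuous f) {x₀ : X} (hx₀ : x₀ ∈ K)
    (hb : IsBounded (K ∩ {x | f x ≤ f x₀})) : ∃ x ∈ K, IsMinOn f K x := by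
  have hcpt : IsCompact (K ∩ {x | f x ≤ f x₀}) :=
    Metric.isCompact_of_isClosed_isBounded (hK.inter (_root_.isClosed_le hf continuous_const)) hb
  obtain ⟨x, ⟨hxK, hx⟩, hmin⟩ := hcpt.exists_isMinOn ⟨x₀, hx₀, le_refl (f x₀)⟩ hf.continuousOn
  refine ⟨x, hxK, fun y hy ↦ ?_⟩
  rcases le_total (f y) (f x₀) with hy₀ | hy₀
  · exact hmin ⟨hy, hy₀⟩
  · exact hx.trans hy₀

section Reduction

variable {E ι : Type*} [AddCommGroup E] [Module ℝ E] {f : E → ℝ} {g : ι → E → ℝ} {d : E}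
  {γ : ι → ℝ}

theorem exists_forall_add_smul_nonpos [Finite ι]
    (hgd : ∀ i (x : E) (t : ℝ), g i (x + t • d) = g i x + t * γ i) (hγ : ∀ i, γ i ≤ 0) {x : E}
    (hx : ∀ i : {i // γ i = 0}, g i x ≤ 0) : ∃ T : ℝ, ∀ i, g i (x + T • d) ≤ 0 := by
  obtain ⟨T, hT⟩ := Finite.bddAbove_range fun i ↦ g i x / -γ i
  refine ⟨T, fun i ↦ ?_⟩
  rw [hgd]
  rcases (hγ i).lt_or_eq with hneg | hzero
  · have := (div_le_iff₀ (neg_pos.2 hneg)).1 (hT ⟨i, rfl⟩)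
    linarith
  · simpa [hzero] using hx ⟨i, hzero⟩

theorem exists_isMinOn_of_ker [Finite ι] (ℓ : Module.Dual ℝ E) (hℓ : ℓ d = 1)
    (hfd : ∀ (x : E) (t : ℝ), f (x + t • d) = f x)
    (hgd : ∀ i (x : E) (t : ℝ), g i (x + t • d) = g i x + t * γ i) (hγ : ∀ i, γ i ≤ 0)
    (hne : {x | ∀ i, g i x ≤ 0}.Nonempty) (hbdd : BddBelow (f '' {x | ∀ i, g i x ≤ 0}))
    (hker : let K' := {y : LinearMap.ker ℓ | ∀ i : {i // γ i = 0}, g i y ≤ 0}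
      K'.Nonempty → BddBelow ((f ∘ (LinearMap.ker ℓ).subtype) '' K') →
      ∃ y ∈ K', IsMinOn (f ∘ (LinearMap.ker ℓ).subtype) K' y) :
    ∃ x ∈ {x | ∀ i, g i x ≤ 0}, IsMinOn f {x | ∀ i, g i x ≤ 0} x := by
  let π (x : E) : LinearMap.ker ℓ := ⟨x + (-ℓ x) • d, by simp [hℓ]⟩
  have hπ {x : E} (hx : ∀ i, g i x ≤ 0) (i : {i // γ i = 0}) : g i (π x) ≤ 0 := by
    change g i (x + (-ℓ x) • d) ≤ 0
    rw [hgd, i.2, mul_zero, add_zero]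
    exact hx i
  obtain ⟨x₀, hx₀⟩ := hne
  obtain ⟨b, hb⟩ := hbdd
  obtain ⟨y, hy, hmin⟩ := hker ⟨π x₀, hπ hx₀⟩ ⟨b, by
    rintro _ ⟨y, hy, rfl⟩
    obtain ⟨T, hT⟩ := exists_forall_add_smul_nonpos hgd hγ hy
    exact (hb ⟨_, hT, rfl⟩).trans_eq (hfd y T)⟩
  obtain ⟨T, hT⟩ := exists_forall_add_smul_nonpos hgd hγ hy
  refine ⟨y + T • d, hT, fun x hx ↦ ?_⟩
  calc f (y + T • d) = f y := hfd _ _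
    _ ≤ f (π x) := hmin (hπ hx)
    _ = f x := hfd _ _

end Reduction

variable {E ι : Type*} [NormedAddCommGroup E] [NormedSpace ℝ E] [FiniteDimensional ℝ E] [Finite ι]

theorem ConvexOn.exists_isMinOn_of_isPolynomialOnLines {f : E → ℝ} {g : ι → E → ℝ}
    (hf : ConvexOn ℝ univ f) (hfp : IsPolynomialOnLines f) (hg : ∀ i, ConvexOn ℝ univ (g i))
    (hgp : ∀ i, IsPolynomialOnLines (g i)) (hne : {x | ∀ i, g i x ≤ 0}.Nonempty)
    (hbdd : BddBelow (f '' {x | ∀ i, g i x ≤ 0})) :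
    ∃ x ∈ {x | ∀ i, g i x ≤ 0}, IsMinOn f {x | ∀ i, g i x ≤ 0} x := by
  induction hn : Module.finrank ℝ E using Nat.strong_induction_on generalizing E ι with
  | _ n ih =>
  set K := {x | ∀ i, g i x ≤ 0}
  obtain ⟨x₀, hx₀⟩ := id hne
  have hcont {h : E → ℝ} (hh : ConvexOn ℝ univ h) : Continuous h :=
    continuousOn_univ.1 (hh.continuousOn isOpen_univ)
  have hKclosed : IsClosed K := by
    simpa only [K, ofPred_forall] using
      isClosed_iInter fun i ↦ _root_.isClosed_le (hcont (hg i)) continuous_const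
  have hSclosed : IsClosed (K ∩ {x | f x ≤ f x₀}) :=
    hKclosed.inter (_root_.isClosed_le (hcont hf) continuous_const)
  have hSconv : Convex ℝ (K ∩ {x | f x ≤ f x₀}) := by
    refine Convex.inter ?_ (by simpa using hf.convex_le (f x₀))
    simpa only [K, ofPred_forall, mem_univ, true_and] using
      convex_iInter fun i ↦ (hg i).convex_le 0
  by_cases hb : IsBounded (K ∩ {x | f x ≤ f x₀})
  · exact hKclosed.exists_isMinOn_of_isBounded_sublevel (hcont hf) hx₀ hb
  obtain ⟨d, hd, hray⟩ :=
    hSconv.exists_ray_subset_of_not_isBounded hSclosed hb ⟨hx₀, le_refl (f x₀)⟩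
  obtain ⟨γf, hγf, hfγ⟩ := hf.exists_slope_of_le_on_ray hfp fun t ht ↦ (hray t ht).2
  have hfd : ∀ (x : E) (t : ℝ), f (x + t • d) = f x := by
    obtain ⟨b, hb⟩ := hbdd
    have : -γf ≤ 0 := nonpos_of_forall_add_mul_le (a := -f x₀) (M := -b) fun t ht ↦ by
      linarith [hfγ x₀ t, hb ⟨_, (hray t ht).1, rfl⟩]
    simp [hfγ, le_antisymm hγf (by linarith)]
  choose γ hγ hgd using fun i ↦
    (hg i).exists_slope_of_le_on_ray (hgp i) fun t ht ↦ (hray t ht).1 i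
  obtain ⟨ℓ, hℓ⟩ := Module.Projective.exists_dual_eq_one ℝ hd
  have hrank : Module.finrank ℝ (LinearMap.ker ℓ) < n := by
    have := Module.Dual.finrank_ker_add_one_of_ne_zero (f := ℓ) (by rintro rfl; simp at hℓ)
    omega
  refine exists_isMinOn_of_ker ℓ hℓ hfd hgd hγ hne hbdd fun hne' hbdd' ↦ ?_
  exact ih _ hrank (hf.comp_linearMap _) (hfp.comp_linearMap _)
    (fun i ↦ (hg i).comp_linearMap (LinearMap.ker ℓ).subtype)
    (fun i ↦ (hgp i).comp_linearMap (LinearMap.ker ℓ).subtype) hne' hbdd' rfl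

/-- A convex polynomial program bounded below attains its infimum (Belousov–Klatte). -/
theorem convex_poly_program_attains_inf {n m : ℕ}
    (pf : MvPolynomial (Fin n) ℝ) (pg : Fin m → MvPolynomial (Fin n) ℝ)
    (f : (Fin n → ℝ) → ℝ) (g : Fin m → (Fin n → ℝ) → ℝ)
    (hf : ∀ x, f x = MvPolynomial.eval x pf)
    (hg : ∀ i x, g i x = MvPolynomial.eval x (pg i))
    (hfc : ConvexOn ℝ Set.univ f) (hgc : ∀ i, ConvexOn ℝ Set.univ (g i))
    (K : Set (Fin n → ℝ)) (hK : K = {x | ∀ i, g i x ≤ 0}) (hKne : K.Nonempty)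
    (hbd : BddBelow (f '' K)) :
    ∃ xs ∈ K, ∀ x ∈ K, f xs ≤ f x := by
  subst hK
  have hfp : IsPolynomialOnLines f := funext hf ▸ pf.isPolynomialOnLines_eval
  have hgp (i : Fin m) : IsPolynomialOnLines (g i) :=
    funext (hg i) ▸ (pg i).isPolynomialOnLines_eval
  exact hfc.exists_isMinOn_of_isPolynomialOnLines hfp hgc hgp hKne hbd
end

section
/- Let f, g₁, …, g_m be convex polynomials on ℝ^n with K = {x : gᵢ(x) ≤ 0 for all i} nonempty, let x* minimize f over K, and let ε > 0. Then there exist λ₁, …, λ_m ≥ 0 such that f(x) − f(x*) + Σᵢ λᵢ gᵢ(x) + ε > 0 for all x ∈ ℝ^n. -/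
/-!
Put `h₀ = f - f x* + ε` and `hᵢ = gᵢ`; the system `hₖ ≤ 0` has no solution. For convex
polynomials this infeasibility survives a small relaxation `hₖ ≤ δ`: if all relaxations were
solvable then, modulo the common lineality space of the `hₖ`, the relaxed feasible sets would be
either eventually bounded, and compactness produces a solution of `hₖ ≤ 0`, or contain a ray.
A convex polynomial bounded above on a ray is affine in its direction with a constant nonpositive
slope, and some slope is negative, so walking along the ray satisfies that constraint and it can
be dropped (induction on the number of constraints). Separating the open box
`{v | ∀ k, vₖ < δ}` from the upward closure of the image of `x ↦ (hₖ x)ₖ` then gives nonnegative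
multipliers with `∑ μₖ hₖ > 0`, and `μ₀ > 0` because `x*` is feasible.
-/

open Set Filter Topology

lemma nonpos_of_forall_mul_le {b c : ℝ} (h : ∀ t : ℝ, 0 ≤ t → t * b ≤ c) : b ≤ 0 := by
  by_contra! hb
  have := h ((|c| + 1) / b) (by positivity)
  rw [div_mul_cancel₀ _ hb.ne'] at this
  linarith [le_abs_self c]

section ConvexFunctions

variable {E : Type*} [AddCommGroup E] [Module ℝ E] {h γ : E → ℝ}

theorem ConvexOn.eq_of_forall_le (hγ : ConvexOn ℝ univ γ) {c : ℝ} (hc : ∀ x, γ x ≤ c)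
    (x y : E) : γ x = γ y := by
  have key : ∀ a b : E, γ b ≤ γ a := by
    intro a b
    have hline : ∀ t : ℝ, 0 ≤ t → t * (γ b - γ a) ≤ c - γ b := by
      intro t ht
      have hsplit : (1 / (t + 1)) • (a + (t + 1) • (b - a)) + (t / (t + 1)) • a = b := by
        match_scalars
        · field_simp
          ring
        · field_simp
      have hcomb := hγ.2 (mem_univ (a + (t + 1) • (b - a))) (mem_univ a)
        (show 0 ≤ 1 / (t + 1) by positivity) (show 0 ≤ t / (t + 1) by positivity)
        (by field_simp; ring)
      rw [hsplit, smul_eq_mul, smul_eq_mul] at hcomb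
      have hfar := hc (a + (t + 1) • (b - a))
      field_simp at hcomb
      nlinarith
    linarith [nonpos_of_forall_mul_le hline]
  exact le_antisymm (key y x) (key x y)

theorem ConvexOn.convexOn_of_add_smul_eq {d : E} (hh : ConvexOn ℝ univ h)
    (haff : ∀ x (t : ℝ), h (x + t • d) = h x + t * γ x) : ConvexOn ℝ univ γ := by
  refine ⟨convex_univ, fun x _ y _ a b ha hb hab => ?_⟩
  have hline : ∀ t : ℝ, 0 ≤ t →
      t * (γ (a • x + b • y) - (a • γ x + b • γ y)) ≤ a * h x + b * h y - h (a • x + b • y) := by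
    intro t _
    have hcomb := hh.2 (mem_univ (x + t • d)) (mem_univ (y + t • d)) ha hb hab
    have hshift : a • (x + t • d) + b • (y + t • d) = a • x + b • y + (a + b) • (t • d) := by
      module
    rw [hshift, hab, one_smul, haff, haff, haff] at hcomb
    simp only [smul_eq_mul] at hcomb ⊢
    linear_combination hcomb
  linarith [nonpos_of_forall_mul_le hline]

theorem ConvexOn.le_of_forall_le_add_smul {x₀ d : E} {c : ℝ} (hh : ConvexOn ℝ univ h)
    (hbd : ∀ t : ℝ, 0 ≤ t → h (x₀ + t • d) ≤ c) (x : E) {t : ℝ} (ht : 0 ≤ t) :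
    h (x + t • d) ≤ (c + h ((2 : ℝ) • x - x₀)) / 2 := by
  have hmid : (1 / 2 : ℝ) • (x₀ + (2 * t) • d) + (1 / 2 : ℝ) • ((2 : ℝ) • x - x₀) = x + t • d := by
    module
  have hcomb := hh.2 (mem_univ (x₀ + (2 * t) • d)) (mem_univ ((2 : ℝ) • x - x₀))
    (show (0 : ℝ) ≤ 1 / 2 by norm_num) (show (0 : ℝ) ≤ 1 / 2 by norm_num) (by norm_num)
  rw [hmid, smul_eq_mul, smul_eq_mul] at hcomb
  linarith [hbd (2 * t) (by positivity)]

end ConvexFunctions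

theorem Polynomial.natDegree_le_one_of_convexOn {q : Polynomial ℝ} {c : ℝ}
    (hq : ConvexOn ℝ univ fun t => q.eval t) (hbd : ∀ t : ℝ, 0 ≤ t → q.eval t ≤ c) :
    q.natDegree ≤ 1 := by
  have hsplit : ∀ t, q.eval t = q.divX.eval t * t + q.eval 0 := fun t => by
    conv_lhs => rw [← q.divX_mul_X_add]
    simp [Polynomial.coeff_zero_eq_eval_zero]
  -- `q.divX.eval t` is the slope of `q` on `[0, t]`, squeezed between the slope on `[-1, 0]`
  -- (convexity) and `(c - q 0) / t`
  have hbounded : IsBoundedUnder (· ≤ ·) atTop fun t => |q.divX.eval t| := by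
    refine ⟨|q.eval 0 - q.eval (-1)| + |c - q.eval 0|, eventually_map.mpr ?_⟩
    filter_upwards [eventually_ge_atTop 1] with t ht
    have ht₀ : (0 : ℝ) < t := by linarith
    have hslope := hq.slope_mono_adjacent (mem_univ (-1)) (mem_univ t) (by norm_num) ht₀
    have hup := hbd t ht₀.le
    rw [hsplit t] at hslope hup
    have hlow : q.eval 0 - q.eval (-1) ≤ q.divX.eval t := by simpa [ht₀.ne'] using hslope
    rw [abs_le]
    constructor
    · linarith [neg_abs_le (q.eval 0 - q.eval (-1)), abs_nonneg (c - q.eval 0)]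
    · nlinarith [abs_nonneg (q.eval 0 - q.eval (-1)), le_abs_self (c - q.eval 0),
        abs_nonneg (c - q.eval 0)]
  have hdeg := (Polynomial.isBoundedUnder_abs_atTop_iff q.divX).mp hbounded
  rw [← Polynomial.natDegree_eq_zero_iff_degree_le_zero,
    Polynomial.natDegree_divX_eq_natDegree_tsub_one] at hdeg
  omega

theorem MvPolynomial.exists_eval_add_smul {σ : Type*} (p : MvPolynomial σ ℝ) (x d : σ → ℝ) :
    ∃ q : Polynomial ℝ, ∀ t : ℝ, q.eval t = MvPolynomial.eval (x + t • d) p := by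
  refine ⟨MvPolynomial.aeval (fun i => Polynomial.C (x i) + Polynomial.C (d i) * Polynomial.X) p,
    fun t => ?_⟩
  rw [← Polynomial.coe_aeval_eq_eval, MvPolynomial.comp_aeval_apply, MvPolynomial.aeval_eq_eval]
  congr 2
  funext i
  simp only [map_add, Polynomial.aeval_C, map_mul, Polynomial.aeval_X]
  simp [mul_comm]

theorem ConvexOn.exists_nonpos_slope_of_forall_le_add_smul {σ : Type*} {h : (σ → ℝ) → ℝ}
    (hh : ConvexOn ℝ univ h) {p : MvPolynomial σ ℝ} (hp : ∀ x, h x = MvPolynomial.eval x p)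
    {x₀ d : σ → ℝ} {c : ℝ} (hbd : ∀ t : ℝ, 0 ≤ t → h (x₀ + t • d) ≤ c) :
    ∃ γ ≤ 0, ∀ x (t : ℝ), h (x + t • d) = h x + t * γ := by
  have haff : ∀ x (t : ℝ), h (x + t • d) = h x + t * (h (x + d) - h x) := by
    intro x t
    obtain ⟨q, hq⟩ := p.exists_eval_add_smul x d
    have hqh : ∀ s : ℝ, q.eval s = h (x + s • d) := fun s => by rw [hq, hp]
    have hconv : ConvexOn ℝ univ fun s => q.eval s := by
      simpa [Function.comp_def, hqh] using
        (hh.translate_right x).comp_linearMap (LinearMap.toSpanSingleton ℝ _ d)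
    have hdeg := Polynomial.natDegree_le_one_of_convexOn hconv
      fun s hs => (hqh s).symm ▸ hh.le_of_forall_le_add_smul hbd x hs
    have hlin : ∀ s : ℝ, h (x + s • d) = q.coeff 1 * s + q.coeff 0 := fun s => by
      rw [← hqh, Polynomial.eq_X_add_C_of_natDegree_le_one hdeg]
      simp
    have h₀ := hlin 0
    have h₁ := hlin 1
    rw [zero_smul, add_zero] at h₀
    rw [one_smul] at h₁
    rw [hlin, h₀, h₁]
    ring
  have hslope : ∀ x, h (x + d) - h x ≤ 0 := fun x =>
    nonpos_of_forall_mul_le (c := (c + h ((2 : ℝ) • x - x₀)) / 2 - h x) fun t ht => by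
      have := hh.le_of_forall_le_add_smul hbd x ht
      rw [haff] at this
      linarith
  refine ⟨_, hslope x₀, fun x t => ?_⟩
  rw [haff, (hh.convexOn_of_add_smul_eq haff).eq_of_forall_le hslope x x₀]

theorem Convex.exists_ne_zero_forall_add_smul_mem_s11 {E : Type*} [NormedAddCommGroup E]
    [NormedSpace ℝ E] [ProperSpace E] {S : Set E} (hconv : Convex ℝ S) (hcl : IsClosed S)
    (hunb : ¬Bornology.IsBounded S) {x₀ : E} (hx₀ : x₀ ∈ S) :
    ∃ d ≠ 0, ∀ t : ℝ, 0 ≤ t → x₀ + t • d ∈ S := by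
  have hfar : ∀ k : ℕ, ∃ x ∈ S, (k : ℝ) < ‖x - x₀‖ := by
    intro k
    by_contra! hk
    exact hunb ((Metric.isBounded_iff_subset_closedBall x₀).2
      ⟨k, fun x hx => by simpa [dist_eq_norm] using hk x hx⟩)
  choose x hxS hxfar using hfar
  have hpos : ∀ k, 0 < ‖x k - x₀‖ := fun k => (Nat.cast_nonneg k).trans_lt (hxfar k)
  have hsphere : ∀ k, ‖x k - x₀‖⁻¹ • (x k - x₀) ∈ Metric.sphere (0 : E) 1 := fun k => by
    simp [norm_smul, (hpos k).ne']
  obtain ⟨d, hd, φ, hφ, hlim⟩ := (isCompact_sphere (0 : E) 1).tendsto_subseq hsphere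
  refine ⟨d, by rintro rfl; simp at hd, fun t ht => ?_⟩
  refine hcl.mem_of_tendsto (tendsto_const_nhds.add (hlim.const_smul t)) ?_
  filter_upwards [eventually_ge_atTop ⌈t⌉₊] with k hk
  have hfar : t ≤ ‖x (φ k) - x₀‖ := calc
    t ≤ k := (Nat.le_ceil t).trans (by exact_mod_cast hk)
    _ ≤ φ k := by exact_mod_cast hφ.id_le k
    _ ≤ ‖x (φ k) - x₀‖ := (hxfar _).le
  have hseg := hconv.add_smul_sub_mem hx₀ (hxS (φ k))
    ⟨div_nonneg ht (hpos _).le, (div_le_one (hpos _)).2 hfar⟩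
  simpa [smul_smul, div_eq_mul_inv] using hseg

theorem exists_forall_mem_of_isBounded {E : Type*} [PseudoMetricSpace E] [ProperSpace E]
    {S : ℝ → Set E} (hmono : Monotone S) (hcl : ∀ δ, IsClosed (S δ))
    (hne : ∀ δ > 0, (S δ).Nonempty) {δ₀ : ℝ} (hδ₀ : 0 < δ₀) (hbdd : Bornology.IsBounded (S δ₀)) :
    ∃ x, ∀ δ > 0, x ∈ S δ := by
  have hanti : ∀ k : ℕ, S (δ₀ / (k + 1 + 1 : ℕ)) ⊆ S (δ₀ / (k + 1 : ℕ)) := fun k =>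
    hmono (div_le_div_of_nonneg_left hδ₀.le (by positivity) (by push_cast; linarith))
  obtain ⟨x, hx⟩ := IsCompact.nonempty_iInter_of_sequence_nonempty_isCompact_isClosed
    (fun k : ℕ => S (δ₀ / (k + 1 : ℕ))) hanti (fun k => hne _ (by positivity))
    (Metric.isCompact_of_isClosed_isBounded (hcl _) (by simpa using hbdd)) (fun k => hcl _)
  refine ⟨x, fun δ hδ => ?_⟩
  obtain ⟨k, hk⟩ := exists_nat_gt (δ₀ / δ)
  refine hmono ?_ (mem_iInter.1 hx k)
  rw [div_le_iff₀ (by positivity)]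
  rw [div_lt_iff₀ hδ] at hk
  push_cast
  nlinarith

section Lineality

variable {ι E : Type*} [AddCommGroup E] [Module ℝ E]

def linealitySpace (h : ι → E → ℝ) (s : Finset ι) : Submodule ℝ E where
  carrier := {d | ∀ i ∈ s, ∀ x (t : ℝ), h i (x + t • d) = h i x}
  add_mem' {d e} hd he i hi x t := by rw [smul_add, ← add_assoc, he i hi, hd i hi]
  zero_mem' i _ x t := by rw [smul_zero, add_zero]
  smul_mem' c d hd i hi x t := by rw [smul_smul]; exact hd i hi x (t * c)

theorem exists_forall_le_zero_of_slope_neg [DecidableEq ι] {h : ι → E → ℝ} {s : Finset ι}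
    {d : E} (hslope : ∀ i ∈ s, ∃ γ ≤ 0, ∀ x (t : ℝ), h i (x + t • d) = h i x + t * γ)
    {j : ι} {γ : ℝ} (hγ : γ < 0) (hj : ∀ x (t : ℝ), h j (x + t • d) = h j x + t * γ)
    {x : E} (hx : ∀ i ∈ s.erase j, h i x ≤ 0) : ∃ y, ∀ i ∈ s, h i y ≤ 0 := by
  obtain ⟨t, ht₀, ht⟩ : ∃ t : ℝ, 0 ≤ t ∧ h j x ≤ t * -γ :=
    ⟨max 0 (h j x / -γ), le_max_left _ _, (div_le_iff₀ (neg_pos.2 hγ)).1 (le_max_right _ _)⟩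
  refine ⟨x + t • d, fun i hi => ?_⟩
  by_cases hij : i = j
  · rw [hij, hj]
    linarith
  · obtain ⟨γi, hγi, hi'⟩ := hslope i hi
    rw [hi']
    linarith [hx i (Finset.mem_erase.2 ⟨hij, hi⟩), mul_nonpos_of_nonneg_of_nonpos ht₀ hγi]

end Lineality

theorem exists_forall_le_zero_of_forall_exists_le {σ ι : Type*} [Fintype σ]
    {h : ι → (σ → ℝ) → ℝ} (hconv : ∀ i, ConvexOn ℝ univ (h i)) {p : ι → MvPolynomial σ ℝ}
    (hp : ∀ i x, h i x = MvPolynomial.eval x (p i)) (s : Finset ι)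
    (hrelax : ∀ δ > 0, ∃ x, ∀ i ∈ s, h i x ≤ δ) : ∃ x, ∀ i ∈ s, h i x ≤ 0 := by
  classical
  induction s using Finset.strongInduction with
  | H s ih =>
  obtain ⟨V, hLV⟩ := (linealitySpace h s).exists_isCompl
  set S : ℝ → Set (σ → ℝ) := fun δ => {x | ∀ i ∈ s, h i x ≤ δ} ∩ V
  have hSne : ∀ δ > 0, (S δ).Nonempty := by
    intro δ hδ
    obtain ⟨x, hx⟩ := hrelax δ hδ
    obtain ⟨l, hl, v, hv, rfl⟩ := Submodule.mem_sup.1 (hLV.sup_eq_top ▸ Submodule.mem_top : x ∈ _)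
    refine ⟨v, fun i hi => ?_, hv⟩
    simpa [add_comm l, ← hl i hi v 1] using hx i hi
  have hScl : ∀ δ, IsClosed (S δ) := fun δ => by
    refine IsClosed.inter ?_ V.closed_of_finiteDimensional
    simp only [ofPred_forall]
    refine isClosed_biInter fun i _ => isClosed_le ?_ continuous_const
    simpa only [← hp i] using (p i).continuous_eval
  by_cases hbdd : ∃ δ > 0, Bornology.IsBounded (S δ)
  · obtain ⟨δ₀, hδ₀, hb⟩ := hbdd
    obtain ⟨x, hx⟩ := exists_forall_mem_of_isBounded
      (fun δ δ' hδ x hx => show x ∈ S δ' from ⟨fun i hi => (hx.1 i hi).trans hδ, hx.2⟩)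
      hScl hSne hδ₀ hb
    exact ⟨x, fun i hi => le_of_forall_pos_le_add fun δ hδ => by simpa using (hx δ hδ).1 i hi⟩
  push Not at hbdd
  obtain ⟨x₀, hx₀⟩ := hSne 1 one_pos
  have hSconv : Convex ℝ (S 1) := by
    refine Convex.inter ?_ V.convex
    simp only [ofPred_forall]
    exact convex_iInter₂ fun i _ => by simpa using (hconv i).convex_le 1
  obtain ⟨d, hd0, hray⟩ := hSconv.exists_ne_zero_forall_add_smul_mem_s11 (hScl 1) (hbdd 1 one_pos) hx₀
  have hdV : d ∈ V := by simpa using V.sub_mem (hray 1 zero_le_one).2 hx₀.2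
  have hslope : ∀ i ∈ s, ∃ γ ≤ 0, ∀ x (t : ℝ), h i (x + t • d) = h i x + t * γ := fun i hi =>
    (hconv i).exists_nonpos_slope_of_forall_le_add_smul (hp i) fun t ht => (hray t ht).1 i hi
  obtain ⟨j, hj, y, t, hne⟩ : ∃ j ∈ s, ∃ y, ∃ t : ℝ, h j (y + t • d) ≠ h j y := by
    by_contra! hdL
    exact hd0 (Submodule.disjoint_def.1 hLV.disjoint d hdL hdV)
  obtain ⟨γ, hγ, hjγ⟩ := hslope j hj
  have hγneg : γ < 0 := hγ.lt_of_ne fun hγ0 => hne (by rw [hjγ, hγ0, mul_zero, add_zero])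
  obtain ⟨x, hx⟩ := ih _ (Finset.erase_ssubset hj) fun δ hδ =>
    (hrelax δ hδ).imp fun x hx i hi => hx i (Finset.mem_of_mem_erase hi)
  exact exists_forall_le_zero_of_slope_neg hslope hγneg hjγ hx

theorem exists_nonneg_sum_mul_pos_of_not_exists_forall_lt {ι E : Type*} [Fintype ι]
    [AddCommGroup E] [Module ℝ E] {h : ι → E → ℝ}
    (hconv : ∀ i, ConvexOn ℝ univ (h i)) {δ : ℝ} (hδ : 0 < δ) (hinf : ¬∃ x, ∀ i, h i x < δ) :
    ∃ μ : ι → ℝ, (∀ i, 0 ≤ μ i) ∧ ∀ x, 0 < ∑ i, μ i * h i x := by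
  classical
  set C : Set (ι → ℝ) := {v | ∃ x, ∀ i, h i x ≤ v i}
  have hC : Convex ℝ C := by
    rintro _ ⟨x, hx⟩ _ ⟨y, hy⟩ a b ha hb hab
    refine ⟨a • x + b • y, fun i => ((hconv i).2 (mem_univ x) (mem_univ y) ha hb hab).trans ?_⟩
    simp only [smul_eq_mul, Pi.add_apply, Pi.smul_apply]
    gcongr
    exacts [hx i, hy i]
  have hdisj : Disjoint (univ.pi fun _ => Iio δ) C := by
    rw [disjoint_left]
    rintro v hv ⟨x, hx⟩
    exact hinf ⟨x, fun i => (hx i).trans_lt (hv i (mem_univ i))⟩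
  obtain ⟨f, u, hfO, hfC⟩ := geometric_hahn_banach_open (convex_pi fun _ _ => convex_Iio δ)
    (isOpen_set_pi finite_univ fun _ _ => isOpen_Iio) hC hdisj
  set μ : ι → ℝ := fun i => f fun j => if i = j then 1 else 0
  have hf : ∀ v, f v = ∑ i, μ i * v i := fun v => by
    simp_rw [mul_comm (μ _)]
    exact f.toLinearMap.pi_apply_eq_sum_univ v
  have hu : 0 < u := by simpa using hfO 0 fun i _ => hδ
  have hμ : ∀ i, 0 ≤ μ i := by
    intro i
    have hray : ∀ t : ℝ, 0 ≤ t → t * -μ i ≤ f (fun j => h j 0) - u := by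
      intro t ht
      have hmem : (fun j => h j 0 + t * if i = j then 1 else 0) ∈ C :=
        ⟨0, fun j => le_add_of_nonneg_right (by split_ifs <;> simp [ht])⟩
      have := hfC _ hmem
      simp only [hf, mul_add, Finset.sum_add_distrib] at this ⊢
      simpa [mul_comm, mul_assoc] using this
    linarith [nonpos_of_forall_mul_le hray]
  exact ⟨μ, hμ, fun x => hf (fun i => h i x) ▸ hu.trans_le (hfC _ ⟨x, fun i => le_rfl⟩)⟩

theorem exists_nonneg_forall_add_sum_mul_pos {ι E : Type*} [Fintype ι] {F : E → ℝ} {G : ι → E → ℝ} {μ₀ : ℝ}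
    {μ : ι → ℝ} (hμ : ∀ i, 0 ≤ μ i) (hpos : ∀ x, 0 < μ₀ * F x + ∑ i, μ i * G i x) {x₀ : E}
    (hF : 0 < F x₀) (hG : ∀ i, G i x₀ ≤ 0) :
    ∃ lam : ι → ℝ, (∀ i, 0 ≤ lam i) ∧ ∀ x, 0 < F x + ∑ i, lam i * G i x := by
  have hμ₀ : 0 < μ₀ := by
    have hsum : ∑ i, μ i * G i x₀ ≤ 0 :=
      Finset.sum_nonpos fun i _ => mul_nonpos_of_nonneg_of_nonpos (hμ i) (hG i)
    exact pos_of_mul_pos_left (by linarith [hpos x₀]) hF.le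
  refine ⟨fun i => μ i / μ₀, fun i => div_nonneg (hμ i) hμ₀.le, fun x => ?_⟩
  have hsum : ∑ i, μ i / μ₀ * G i x = (∑ i, μ i * G i x) / μ₀ := by
    rw [Finset.sum_div]
    simp_rw [div_mul_eq_mul_div]
  have hscaled := div_pos (hpos x) hμ₀
  rwa [add_div, mul_div_cancel_left₀ _ hμ₀.ne', ← hsum] at hscaled

/-- Approximate Lagrangian positivity: there exist nonnegative multipliers making the
`ε`-shifted Lagrangian everywhere positive. -/
theorem approx_lagrangian_positivity {n m : ℕ}
    (pf : MvPolynomial (Fin n) ℝ) (pg : Fin m → MvPolynomial (Fin n) ℝ)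
    (f : (Fin n → ℝ) → ℝ) (g : Fin m → (Fin n → ℝ) → ℝ)
    (hf : ∀ x, f x = MvPolynomial.eval x pf)
    (hg : ∀ i x, g i x = MvPolynomial.eval x (pg i))
    (hfc : ConvexOn ℝ Set.univ f) (hgc : ∀ i, ConvexOn ℝ Set.univ (g i))
    (K : Set (Fin n → ℝ)) (hK : K = {x | ∀ i, g i x ≤ 0})
    (xs : Fin n → ℝ) (hxs : xs ∈ K) (hmin : ∀ x ∈ K, f xs ≤ f x)
    (ε : ℝ) (hε : 0 < ε) :
    ∃ lam : Fin m → ℝ, (∀ i, 0 ≤ lam i) ∧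
      ∀ x : Fin n → ℝ, 0 < f x - f xs + (∑ i, lam i * g i x) + ε := by
  subst hK
  set h : Option (Fin m) → (Fin n → ℝ) → ℝ := fun k => k.elim (fun x => f x - f xs + ε) g
  have hconv : ∀ k, ConvexOn ℝ univ (h k) := by
    rintro (_ | i)
    · exact (hfc.sub (concaveOn_const _ convex_univ)).add (convexOn_const _ convex_univ)
    · exact hgc i
  have hp : ∀ k x, h k x =
      MvPolynomial.eval x (k.elim (pf - MvPolynomial.C (f xs) + MvPolynomial.C ε) pg) := by
    rintro (_ | i) x <;> simp [h, hf, hg]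
  have hinfeas : ¬∃ x, ∀ k, h k x ≤ 0 := fun ⟨x, hx⟩ => by
    have hfeas := hmin x fun i => hx (some i)
    have hnone : f x - f xs + ε ≤ 0 := hx none
    linarith
  obtain ⟨δ, hδ, hno⟩ : ∃ δ > 0, ¬∃ x, ∀ k, h k x < δ := by
    by_contra! hall
    obtain ⟨x, hx⟩ := exists_forall_le_zero_of_forall_exists_le hconv hp Finset.univ
      fun δ hδ => (hall δ hδ).imp fun x hx k _ => (hx k).le
    exact hinfeas ⟨x, fun k => hx k (Finset.mem_univ k)⟩
  obtain ⟨μ, hμ, hpos⟩ := exists_nonneg_sum_mul_pos_of_not_exists_forall_lt hconv hδ hno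
  simp only [Fintype.sum_option, h, Option.elim] at hpos
  obtain ⟨lam, hlam, hlampos⟩ := exists_nonneg_forall_add_sum_mul_pos (fun i => hμ (some i)) hpos
    (x₀ := xs) (by linarith) hxs
  exact ⟨lam, hlam, fun x => by linarith [hlampos x]⟩
end

section
/- Let p be a convex homogeneous polynomial (convex form) on ℝ^n of degree ≥ 4 that is not a sum of squares of polynomials. Then p does not belong to the quadratic module M(c − p) ⊂ ℝ[x] for any c > 0; equivalently, there do not exist sum-of-squares polynomials σ₀, σ with p = σ₀ + σ·(c − p). -/
/-!
Put `S = σ₀ + c σ`; the relation `p = σ₀ + σ (c - p)` reads `(1 + σ) p = S`. As `p` is a form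
of degree `d`, the homogeneous components of `S` below degree `d` vanish and its degree-`d`
component is `(1 + σ(0)) p`. If all components of a sum of squares `∑ qⱼ²` below degree `d`
vanish, then so do those of every `qⱼ` below degree `d / 2`, because the component of degree
`2i` just above them is `∑ (qⱼ)ᵢ²`, which is zero only if every `(qⱼ)ᵢ` is. Its degree-`d`
component is then `∑ (qⱼ)_{d/2}²` (or `0` for odd `d`), again a sum of squares. Since
`1 + σ(0) > 0`, `p` is a sum of squares.
-/

def IsSOS {n : ℕ} (p : MvPolynomial (Fin n) ℝ) : Prop :=
  ∃ (k : ℕ) (q : Fin k → MvPolynomial (Fin n) ℝ), p = ∑ j, (q j) ^ 2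

open MvPolynomial Finset

namespace MvPolynomial

section HomogeneousComponent

variable {σ R : Type*} [CommSemiring R]

attribute [local instance] gradedAlgebra in
theorem homogeneousComponent_mul (f g : MvPolynomial σ R) (m : ℕ) :
    homogeneousComponent m (f * g) =
      ∑ ij ∈ antidiagonal m, homogeneousComponent ij.1 f * homogeneousComponent ij.2 g := by
  simp_rw [← decomposition.decompose'_apply, ← DirectSum.coe_mul_apply_eq_sum_antidiagonal]
  exact congrArg (fun x => (x m : MvPolynomial σ R))
    (DirectSum.decompose_mul (homogeneousSubmodule σ R) f g)

variable {f g : MvPolynomial σ R} {a b : ℕ}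

theorem homogeneousComponent_mul_eq_zero_of_lt (hf : ∀ i < a, homogeneousComponent i f = 0)
    (hg : ∀ j < b, homogeneousComponent j g = 0) {m : ℕ} (hm : m < a + b) :
    homogeneousComponent m (f * g) = 0 := by
  rw [homogeneousComponent_mul]
  refine sum_eq_zero fun ij hij => ?_
  have hsum := mem_antidiagonal.mp hij
  rcases lt_or_ge ij.1 a with h | h
  · rw [hf _ h, zero_mul]
  · rw [hg _ (by omega), mul_zero]

theorem homogeneousComponent_add_mul (hf : ∀ i < a, homogeneousComponent i f = 0)
    (hg : ∀ j < b, homogeneousComponent j g = 0) :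
    homogeneousComponent (a + b) (f * g) =
      homogeneousComponent a f * homogeneousComponent b g := by
  rw [homogeneousComponent_mul, sum_eq_single_of_mem (a, b) (mem_antidiagonal.mpr rfl)]
  intro ij hij hne
  have hsum := mem_antidiagonal.mp hij
  have : ij.1 < a ∨ ij.2 < b := by
    by_contra! h
    exact hne (Prod.ext (by omega) (by omega))
  rcases this with h | h
  · rw [hf _ h, zero_mul]
  · rw [hg _ h, mul_zero]

end HomogeneousComponent

theorem eq_zero_of_sum_sq_eq_zero {σ ι : Type*} [Fintype ι] {q : ι → MvPolynomial σ ℝ}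
    (h : ∑ j, q j ^ 2 = 0) (j : ι) : q j = 0 := by
  refine funext fun x => ?_
  have hx : ∑ j, eval x (q j) ^ 2 = 0 := by simpa using congrArg (eval x) h
  simpa using (sum_eq_zero_iff_of_nonneg fun j _ => sq_nonneg _).mp hx j (mem_univ j)

theorem homogeneousComponent_eq_zero_of_sum_sq {σ ι : Type*} [Fintype ι]
    {q : ι → MvPolynomial σ ℝ} {d : ℕ}
    (h : ∀ m < d, homogeneousComponent m (∑ j, q j ^ 2) = 0) :
    ∀ i, 2 * i < d → ∀ j, homogeneousComponent i (q j) = 0 := by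
  intro i
  induction i using Nat.strong_induction_on with
  | _ i ih =>
    intro hi
    have hlow : ∀ j, ∀ i' < i, homogeneousComponent i' (q j) = 0 :=
      fun j i' hi' => ih i' hi' (by omega) j
    refine eq_zero_of_sum_sq_eq_zero ?_
    rw [← h (i + i) (by omega), map_sum]
    exact sum_congr rfl fun j _ => by rw [sq, sq, homogeneousComponent_add_mul (hlow j) (hlow j)]

end MvPolynomial

namespace IsSOS

variable {n : ℕ} {p q : MvPolynomial (Fin n) ℝ}

theorem zero : IsSOS (0 : MvPolynomial (Fin n) ℝ) := ⟨0, Fin.elim0, by simp⟩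

theorem add (hp : IsSOS p) (hq : IsSOS q) : IsSOS (p + q) := by
  obtain ⟨k, f, rfl⟩ := hp
  obtain ⟨l, g, rfl⟩ := hq
  exact ⟨k + l, Fin.append f g, by simp [Fin.sum_univ_add]⟩

theorem C_mul {c : ℝ} (hc : 0 ≤ c) (hp : IsSOS p) : IsSOS (C c * p) := by
  obtain ⟨k, f, rfl⟩ := hp
  refine ⟨k, fun j => C √c * f j, ?_⟩
  simp_rw [mul_sum, mul_pow, ← C_pow, Real.sq_sqrt hc]

theorem constantCoeff_nonneg (hp : IsSOS p) : 0 ≤ constantCoeff p := by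
  obtain ⟨k, f, rfl⟩ := hp
  simpa using sum_nonneg fun j _ => sq_nonneg (constantCoeff (f j))

theorem homogeneousComponent_of_forall_lt (hp : IsSOS p) {d : ℕ}
    (h : ∀ m < d, homogeneousComponent m p = 0) : IsSOS (homogeneousComponent d p) := by
  obtain ⟨k, f, rfl⟩ := hp
  have hf := homogeneousComponent_eq_zero_of_sum_sq h
  rcases Nat.even_or_odd' d with ⟨u, rfl | rfl⟩
  · have hlow : ∀ j, ∀ i < u, homogeneousComponent i (f j) = 0 :=
      fun j i hi => hf i (by omega) j
    refine ⟨k, fun j => homogeneousComponent u (f j), ?_⟩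
    rw [two_mul, map_sum]
    exact sum_congr rfl fun j _ => by rw [sq, sq, homogeneousComponent_add_mul (hlow j) (hlow j)]
  · have hlow : ∀ j, ∀ i < u + 1, homogeneousComponent i (f j) = 0 :=
      fun j i hi => hf i (by omega) j
    convert zero
    rw [map_sum]
    exact sum_eq_zero fun j _ => by
      rw [sq]
      exact homogeneousComponent_mul_eq_zero_of_lt (hlow j) (hlow j) (by omega)

end IsSOS

theorem convex_form_not_sos_not_in_quadratic_module_general {n : ℕ}
    (p : MvPolynomial (Fin n) ℝ) (d : ℕ)
    (hhom : p.IsHomogeneous d)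
    (hnsos : ¬ IsSOS p) :
    ∀ c : ℝ, 0 < c →
      ¬ ∃ σ₀ σ : MvPolynomial (Fin n) ℝ, IsSOS σ₀ ∧ IsSOS σ ∧
        p = σ₀ + σ * (MvPolynomial.C c - p) := by
  rintro c hc ⟨σ₀, σ, hσ₀, hσ, hp⟩
  set S := σ₀ + C c * σ
  have hS : IsSOS S := hσ₀.add (hσ.C_mul hc.le)
  have hfac : (1 + σ) * p = S := by linear_combination hp
  have hp_low : ∀ i < d, homogeneousComponent i p = 0 := fun i hi =>
    homogeneousComponent_of_mem hhom |>.trans (if_neg hi.ne)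
  have hS_low : ∀ m < d, homogeneousComponent m S = 0 := fun m hm => by
    rw [← hfac]
    exact homogeneousComponent_mul_eq_zero_of_lt (a := 0) (by simp) hp_low (by omega)
  have hS_top : homogeneousComponent d S = C (1 + constantCoeff σ) * p := by
    rw [← hfac, ← zero_add d, homogeneousComponent_add_mul (by simp) hp_low,
      homogeneousComponent_zero, homogeneousComponent_of_mem hhom, if_pos rfl, constantCoeff_eq,
      coeff_add, coeff_zero_one]
  have hunit : 0 < 1 + constantCoeff σ := by linarith [hσ.constantCoeff_nonneg]
  have hp_eq : p = C (1 + constantCoeff σ)⁻¹ * homogeneousComponent d S := by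
    rw [hS_top, ← mul_assoc, ← C_mul, inv_mul_cancel₀ hunit.ne', C_1, one_mul]
  refine hnsos (hp_eq ▸ ?_)
  exact (hS.homogeneousComponent_of_forall_lt hS_low).C_mul (inv_nonneg.mpr hunit.le)

/-- A convex form of degree ≥ 4 that is not SOS does not lie in the quadratic module
`M(c − p)` for any `c > 0`. -/
theorem convex_form_not_sos_not_in_quadratic_module {n : ℕ}
    (p : MvPolynomial (Fin n) ℝ) (d : ℕ) (hd : 4 ≤ d)
    (hhom : p.IsHomogeneous d)
    (hconv : ConvexOn ℝ Set.univ fun x : Fin n → ℝ => MvPolynomial.eval x p)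
    (hnsos : ¬ IsSOS p) :
    ∀ c : ℝ, 0 < c →
      ¬ ∃ σ₀ σ : MvPolynomial (Fin n) ℝ, IsSOS σ₀ ∧ IsSOS σ ∧
        p = σ₀ + σ * (MvPolynomial.C c - p) :=
  convex_form_not_sos_not_in_quadratic_module_general p d hhom hnsos
end

section
/- If the Lasserre hierarchy for the convex program min{f(x) : gᵢ(x) ≤ 0, i=1,…,m} has finite convergence, i.e., f − f* = σ₀ − Σᵢ σᵢgᵢ + σ(c − f) for some sums of squares σ, σ₀, σ₁,…,σ_m and some c > f*, then for every minimizer x* of f over K there exists λ* ∈ ℝ₊^m such that (x*, λ*) is a saddle-point of the Lagrangian L(x,λ) = f(x) + Σᵢ λᵢgᵢ(x). -/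
open Set Filter Topology Asymptotics MvPolynomial

theorem IsSOS.eval_nonneg {n : ℕ} {p : MvPolynomial (Fin n) ℝ} (h : IsSOS p)
    (x : Fin n → ℝ) : 0 ≤ eval x p := by
  obtain ⟨k, q, rfl⟩ := h
  simp only [map_sum, map_pow]
  exact Finset.sum_nonneg fun j _ => sq_nonneg _

theorem MvPolynomial.differentiable_eval {𝕜 σ : Type*} [NontriviallyNormedField 𝕜] [Fintype σ]
    (p : MvPolynomial σ 𝕜) : Differentiable 𝕜 fun x : σ → 𝕜 => eval x p := by
  induction p using MvPolynomial.induction_on with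
  | C a => simp
  | add p q hp hq => simp only [map_add]; exact hp.add hq
  | mul_X p i hp => simp only [map_mul, eval_X]; exact hp.mul (differentiable_apply i)

theorem ConvexOn.sum {𝕜 E β ι : Type*} [Semiring 𝕜] [PartialOrder 𝕜] [AddCommMonoid E]
    [AddCommMonoid β] [PartialOrder β] [IsOrderedAddMonoid β] [SMul 𝕜 E] [Module 𝕜 β]
    [PosSMulMono 𝕜 β] {s : Set E} (hs : Convex 𝕜 s) {t : Finset ι} {f : ι → E → β}
    (hf : ∀ i ∈ t, ConvexOn 𝕜 s (f i)) : ConvexOn 𝕜 s fun x => ∑ i ∈ t, f i x := by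
  simpa only [← Finset.sum_apply] using
    Finset.sum_induction f (ConvexOn 𝕜 s) (fun _ _ => ConvexOn.add) (convexOn_const 0 hs) hf

section NormedSpace

variable {E : Type*} [NormedAddCommGroup E] [NormedSpace ℝ E]

theorem ConvexOn.isMinOn_of_eventually_add_isLittleO_le {h e : E → ℝ} {a : E}
    (hh : ConvexOn ℝ univ h) (he : e =o[𝓝 a] fun y => y - a)
    (hle : ∀ᶠ y in 𝓝 a, h a + e y ≤ h y) : IsMinOn h univ a := by
  intro y _
  set ℓ : ℝ → E := fun t => a + t • (y - a)
  have hℓ : Tendsto ℓ (𝓝 0) (𝓝 a) := by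
    have : Continuous ℓ := by fun_prop
    simpa [ℓ] using this.tendsto 0
  have heℓ : (fun t => e (ℓ t)) =o[𝓝 0] id :=
    (he.comp_tendsto hℓ).trans_isBigO <| IsBigO.of_bound ‖y - a‖ <|
      Eventually.of_forall fun t => by simp [ℓ, norm_smul, mul_comm]
  have hev : ∀ᶠ t in 𝓝[>] 0, h a - h y ≤ -(e (ℓ t) / t) := by
    filter_upwards [nhdsWithin_le_nhds (hℓ.eventually hle), Ioo_mem_nhdsGT one_pos]
      with t hlt ⟨ht0, ht1⟩
    have hℓt : ℓ t = (1 - t) • a + t • y := by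
      simp only [ℓ, smul_sub, sub_smul, one_smul]; abel
    have hcvx : h (ℓ t) ≤ (1 - t) * h a + t * h y := by
      simpa only [hℓt, smul_eq_mul] using
        hh.2 (mem_univ a) (mem_univ y) (by linarith : (0:ℝ) ≤ 1 - t) ht0.le (by ring)
    rw [le_neg, div_le_iff₀ ht0]
    nlinarith
  simpa using ge_of_tendsto (heℓ.tendsto_div_nhds_zero.neg.mono_left nhdsWithin_le_nhds) hev

theorem exists_isLittleO_le_sub_mul {s g : E → ℝ} {a : E} (hs : ContinuousAt s a)
    (hg : DifferentiableAt ℝ g a) (hs0 : ∀ᶠ y in 𝓝 a, 0 ≤ s y) (hga : g a ≤ 0)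
    (hsg : s a * g a = 0) :
    ∃ e : E → ℝ, e =o[𝓝 a] (fun y => y - a) ∧ ∀ᶠ y in 𝓝 a, e y ≤ (s a - s y) * g y := by
  rcases hga.lt_or_eq with hlt | heq
  · have hsa : s a = 0 := (mul_eq_zero.mp hsg).resolve_right hlt.ne
    refine ⟨0, isLittleO_zero _ _, ?_⟩
    filter_upwards [hs0, hg.continuousAt.eventually (eventually_lt_nhds hlt)] with y hsy hgy
    rw [hsa, zero_sub]
    exact mul_nonneg_of_nonpos_of_nonpos (neg_nonpos.2 hsy) hgy.le
  · refine ⟨fun y => (s a - s y) * g y, ?_, Eventually.of_forall fun _ => le_rfl⟩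
    have hu : (fun y => s a - s y) =o[𝓝 a] fun _ => (1 : ℝ) :=
      (isLittleO_one_iff ℝ).2 (by simpa using (tendsto_const_nhds (x := s a)).sub hs)
    simpa [heq] using hu.smul_isBigO hg.isBigO_sub

end NormedSpace

theorem finite_convergence_implies_saddle_point_general {n m : ℕ}
    (pf : MvPolynomial (Fin n) ℝ) (pg : Fin m → MvPolynomial (Fin n) ℝ)
    (hfc : ConvexOn ℝ Set.univ fun x : Fin n → ℝ => MvPolynomial.eval x pf)
    (hgc : ∀ i, ConvexOn ℝ Set.univ fun x : Fin n → ℝ => MvPolynomial.eval x (pg i))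
    (K : Set (Fin n → ℝ)) (hK : K = {x | ∀ i, MvPolynomial.eval x (pg i) ≤ 0})
    (fstar : ℝ) (xs : Fin n → ℝ) (hxs : xs ∈ K)
    (hfstar : fstar = MvPolynomial.eval xs pf)
    (hconv : ∃ (c : ℝ), fstar < c ∧
      ∃ (σ σ₀ : MvPolynomial (Fin n) ℝ) (σs : Fin m → MvPolynomial (Fin n) ℝ),
        IsSOS σ ∧ IsSOS σ₀ ∧ (∀ i, IsSOS (σs i)) ∧
        pf - MvPolynomial.C fstar
          = σ₀ - (∑ i, σs i * pg i) + σ * (MvPolynomial.C c - pf)) :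
    ∃ lams : Fin m → ℝ, (∀ i, 0 ≤ lams i) ∧
      (∀ x : Fin n → ℝ,
        MvPolynomial.eval x pf + ∑ i, lams i * MvPolynomial.eval x (pg i)
          ≥ MvPolynomial.eval xs pf + ∑ i, lams i * MvPolynomial.eval xs (pg i)) ∧
      (∀ lam : Fin m → ℝ, (∀ i, 0 ≤ lam i) →
        MvPolynomial.eval xs pf + ∑ i, lams i * MvPolynomial.eval xs (pg i)
          ≥ MvPolynomial.eval xs pf + ∑ i, lam i * MvPolynomial.eval xs (pg i)) := by
  obtain ⟨c, hc, σ, σ₀, σs, hσ, hσ₀, hσs, hid⟩ := hconv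
  have hgxs : ∀ i, eval xs (pg i) ≤ 0 := by simpa [hK] using hxs
  have hcert : ∀ y, eval y pf - fstar
      = eval y σ₀ - ∑ i, eval y (σs i) * eval y (pg i) + eval y σ * (c - eval y pf) := by
    intro y
    simpa using congrArg (eval y) hid
  set lams : Fin m → ℝ := fun i => eval xs (σs i)
  have hlams : ∀ i, 0 ≤ lams i := fun i => (hσs i).eval_nonneg xs
  have hfxs : eval xs pf < c := hfstar ▸ hc
  have hslack : ∀ i, lams i * eval xs (pg i) = 0 := by
    have hterm : ∀ i ∈ Finset.univ, lams i * eval xs (pg i) ≤ 0 :=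
      fun i _ => mul_nonpos_of_nonneg_of_nonpos (hlams i) (hgxs i)
    have hsum : ∑ i, lams i * eval xs (pg i) = 0 := by
      linarith [hcert xs, Finset.sum_nonpos hterm, hσ₀.eval_nonneg xs,
        mul_nonneg (hσ.eval_nonneg xs) (sub_nonneg.2 hfxs.le)]
    exact fun i => (Finset.sum_eq_zero_iff_of_nonpos hterm).1 hsum i (Finset.mem_univ i)
  have hLxs : eval xs pf + ∑ i, lams i * eval xs (pg i) = fstar := by
    simp [hslack, hfstar]
  refine ⟨lams, hlams, fun x => ?_, fun lam hlam => ?_⟩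
  · choose e he hle using fun i => exists_isLittleO_le_sub_mul
      (differentiable_eval (σs i)).continuous.continuousAt (differentiable_eval (pg i) xs)
      (Eventually.of_forall fun y => (hσs i).eval_nonneg y) (hgxs i) (hslack i)
    have hfc_lt : ∀ᶠ y in 𝓝 xs, eval y pf < c :=
      (continuous_eval pf).continuousAt.eventually (eventually_lt_nhds hfxs)
    have hL : ConvexOn ℝ univ fun y => eval y pf + ∑ i, lams i * eval y (pg i) :=
      hfc.add (ConvexOn.sum convex_univ fun i _ => (hgc i).smul (hlams i))
    refine hL.isMinOn_of_eventually_add_isLittleO_le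
      (IsLittleO.sum (s := Finset.univ) fun i _ => he i) ?_ (mem_univ x)
    filter_upwards [eventually_all.2 hle, hfc_lt] with y hey hfy
    have hsum := Finset.sum_le_sum fun i (_ : i ∈ Finset.univ) => hey i
    simp only [sub_mul, Finset.sum_sub_distrib] at hsum
    rw [hLxs, Finset.sum_apply]
    linarith [hcert y, hσ₀.eval_nonneg y, mul_nonneg (hσ.eval_nonneg y) (sub_nonneg.2 hfy.le)]
  · rw [ge_iff_le, hLxs, ← hfstar]
    linarith [Finset.sum_nonpos fun i (_ : i ∈ Finset.univ) =>
      mul_nonpos_of_nonneg_of_nonpos (hlam i) (hgxs i)]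

/-- Finite convergence of the Lasserre hierarchy implies existence of a saddle-point of the
Lagrangian at every minimizer. -/
theorem finite_convergence_implies_saddle_point {n m : ℕ}
    (pf : MvPolynomial (Fin n) ℝ) (pg : Fin m → MvPolynomial (Fin n) ℝ)
    (hfc : ConvexOn ℝ Set.univ fun x : Fin n → ℝ => MvPolynomial.eval x pf)
    (hgc : ∀ i, ConvexOn ℝ Set.univ fun x : Fin n → ℝ => MvPolynomial.eval x (pg i))
    (K : Set (Fin n → ℝ)) (hK : K = {x | ∀ i, MvPolynomial.eval x (pg i) ≤ 0})
    (hKne : K.Nonempty)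
    (fstar : ℝ) (xs : Fin n → ℝ) (hxs : xs ∈ K)
    (hfstar : fstar = MvPolynomial.eval xs pf)
    (hmin : ∀ x ∈ K, fstar ≤ MvPolynomial.eval x pf)
    (hconv : ∃ (c : ℝ), fstar < c ∧
      ∃ (σ σ₀ : MvPolynomial (Fin n) ℝ) (σs : Fin m → MvPolynomial (Fin n) ℝ),
        IsSOS σ ∧ IsSOS σ₀ ∧ (∀ i, IsSOS (σs i)) ∧
        pf - MvPolynomial.C fstar
          = σ₀ - (∑ i, σs i * pg i) + σ * (MvPolynomial.C c - pf)) :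
    ∃ lams : Fin m → ℝ, (∀ i, 0 ≤ lams i) ∧
      (∀ x : Fin n → ℝ,
        MvPolynomial.eval x pf + ∑ i, lams i * MvPolynomial.eval x (pg i)
          ≥ MvPolynomial.eval xs pf + ∑ i, lams i * MvPolynomial.eval xs (pg i)) ∧
      (∀ lam : Fin m → ℝ, (∀ i, 0 ≤ lam i) →
        MvPolynomial.eval xs pf + ∑ i, lams i * MvPolynomial.eval xs (pg i)
          ≥ MvPolynomial.eval xs pf + ∑ i, lam i * MvPolynomial.eval xs (pg i)) :=
  finite_convergence_implies_saddle_point_general pf pg hfc hgc K hK fstar xs hxs hfstar hconv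
end
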